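/- arXiv:1711.07287 — 3 statements merged into one kernel-verified Lean document; each statement's English description precedes it below -/
import Mathlib

section
/- Let a, b > −1 be real numbers and let ℓ_f, ℓ_g be slowly varying at infinity. Let f, g : (0,∞) → (0,∞) be locally bounded measurable functions with f(x) = ℓ_f(x)·x^a and g(x) = ℓ_g(x)·x^b for all x > 0. Then ∫₀ᵗ f(x) g(t−x) dx ~ (Γ(a+1)Γ(b+1)/Γ(a+b+2)) · t · f(t) · g(t) as t → ∞. -/
open MeasureTheory Filter Set

noncomputable section

/-- A positive measurable function `ℓ` is slowly varying at infinity if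
`ℓ(c t)/ℓ(t) → 1` as `t → ∞` for every `c > 0`. -/
def SlowlyVarying (ℓ : ℝ → ℝ) : Prop :=
  ∀ c > 0, Filter.Tendsto (fun t => ℓ (c * t) / ℓ t) Filter.atTop (nhds 1)

open scoped ENNReal

namespace SVAux

variable {ℓ : ℝ → ℝ}

/-- log-form of slow variation. -/
theorem log_tendsto (hpos : ∀ x > 0, 0 < ℓ x) (hs : SlowlyVarying ℓ) (u : ℝ) :
    Tendsto (fun s => Real.log (ℓ (Real.exp (s + u))) - Real.log (ℓ (Real.exp s)))
      atTop (nhds 0) := by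
  have h1 : Tendsto (fun s : ℝ => ℓ (Real.exp u * Real.exp s) / ℓ (Real.exp s))
      atTop (nhds 1) := (hs (Real.exp u) (Real.exp_pos u)).comp Real.tendsto_exp_atTop
  have h2 := (Real.continuousAt_log one_ne_zero).tendsto.comp h1
  rw [Real.log_one] at h2
  refine h2.congr fun s => ?_
  have e1 : (0:ℝ) < ℓ (Real.exp u * Real.exp s) := hpos _ (by positivity)
  have e2 : (0:ℝ) < ℓ (Real.exp s) := hpos _ (Real.exp_pos s)
  simp only [Function.comp]
  rw [Real.log_div e1.ne' e2.ne', Real.exp_add, mul_comm (Real.exp s)]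

theorem uct (hm : Measurable ℓ) (hpos : ∀ x > 0, 0 < ℓ x) (hs : SlowlyVarying ℓ)
    {ε : ℝ} (hε : 0 < ε) :
    ∃ S : ℝ, ∀ s ≥ S, ∀ u ∈ Icc (0:ℝ) 1,
      |Real.log (ℓ (Real.exp (s + u))) - Real.log (ℓ (Real.exp s))| ≤ ε := by
  set h : ℝ → ℝ := fun x => Real.log (ℓ (Real.exp x)) with hh
  have hmeas : Measurable h := (Real.measurable_log.comp (hm.comp Real.measurable_exp))
  by_contra hcon
  push_neg at hcon
  -- extract sequences
  have hseq : ∀ n : ℕ, ∃ s : ℝ, s ≥ n ∧ ∃ u ∈ Icc (0:ℝ) 1, ε < |h (s + u) - h s| := by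
    intro n; obtain ⟨s, hs1, u, hu, hgt⟩ := hcon n; exact ⟨s, hs1, u, hu, hgt⟩
  choose s hsn u hu hgt using hseq
  have hstend : Tendsto s atTop atTop :=
    tendsto_atTop_mono (fun n => hsn n) tendsto_natCast_atTop_atTop
  have hsutend : Tendsto (fun n => s n + u n) atTop atTop :=
    tendsto_atTop_mono (fun n => le_add_of_nonneg_right (hu n).1) hstend
  -- the sets
  set A : ℕ → Set ℝ := fun n => Icc (0:ℝ) 2 ∩
    ⋂ m, ⋂ (_ : n ≤ m), ({y | |h (s m + y) - h (s m)| ≤ ε/2} ∩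
      {y | |h (s m + u m + y) - h (s m + u m)| ≤ ε/2}) with hA
  have hAmeas : ∀ n, MeasurableSet (A n) := by
    intro n
    refine measurableSet_Icc.inter (MeasurableSet.iInter fun m => MeasurableSet.iInter fun _ => ?_)
    refine MeasurableSet.inter ?_ ?_ <;>
    · apply measurableSet_le (by fun_prop) measurable_const
  have hAmono : Monotone A := by
    intro n n' hnn' y hy
    refine ⟨hy.1, ?_⟩
    have := hy.2
    simp only [mem_iInter] at this ⊢
    intro m hm; exact this m (hnn'.trans hm)
  have hAunion : Icc (0:ℝ) 2 ⊆ ⋃ n, A n := by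
    intro y hy
    have t1 : Tendsto (fun n => |h (s n + y) - h (s n)|) atTop (nhds 0) := by
      have := (log_tendsto hpos hs y).comp hstend
      simpa using this.abs
    have t2 : Tendsto (fun n => |h (s n + u n + y) - h (s n + u n)|) atTop (nhds 0) := by
      have := (log_tendsto hpos hs y).comp hsutend
      simpa using this.abs
    have hev : ∀ᶠ n in atTop, |h (s n + y) - h (s n)| ≤ ε/2 ∧
        |h (s n + u n + y) - h (s n + u n)| ≤ ε/2 := by
      have e1 := t1.eventually_le_const (show (0:ℝ) < ε/2 by linarith)
      have e2 := t2.eventually_le_const (show (0:ℝ) < ε/2 by linarith)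
      filter_upwards [e1, e2] with n ha hb
      exact ⟨ha, hb⟩
    obtain ⟨N, hN⟩ := hev.exists_forall_of_atTop
    refine mem_iUnion.2 ⟨N, hy, ?_⟩
    simp only [mem_iInter]
    intro m hm
    exact ⟨(hN m hm).1, (hN m hm).2⟩
  -- measure argument
  have hvol : (3/2 : ℝ≥0∞) < volume (⋃ n, A n) := by
    have : volume (Icc (0:ℝ) 2) ≤ volume (⋃ n, A n) := measure_mono hAunion
    rw [Real.volume_Icc] at this
    norm_num at this
    refine lt_of_lt_of_le ?_ this
    rw [ENNReal.div_lt_iff (by norm_num) (by norm_num)]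
    norm_num
  rw [hAmono.measure_iUnion] at hvol
  obtain ⟨N, hN⟩ := lt_iSup_iff.1 hvol
  -- translate
  set C : Set ℝ := (fun y => -u N + y) ⁻¹' (A N) with hC
  have hCvol : volume C = volume (A N) := by
    rw [hC, measure_preimage_add]
  have hBsub : A N ⊆ Icc (0:ℝ) 3 := fun y hy => ⟨hy.1.1, hy.1.2.trans (by norm_num)⟩
  have hCsub : C ⊆ Icc (0:ℝ) 3 := by
    intro y hy
    have h1 : -u N + y ∈ Icc (0:ℝ) 2 := hy.1
    have := (hu N).1; have := (hu N).2
    constructor <;> [linarith [h1.1]; linarith [h1.2]]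
  have hinter : (A N ∩ C).Nonempty := by
    by_contra hemp
    rw [not_nonempty_iff_eq_empty] at hemp
    have hdisj : Disjoint (A N) C := disjoint_iff_inter_eq_empty.2 hemp
    have : volume (A N ∪ C) = volume (A N) + volume C :=
      measure_union hdisj ((hAmeas N).preimage (measurable_const_add (-u N)))
    have hle : volume (A N ∪ C) ≤ volume (Icc (0:ℝ) 3) :=
      measure_mono (union_subset hBsub hCsub)
    rw [Real.volume_Icc] at hle
    rw [this, hCvol] at hle
    have : (3:ℝ≥0∞) < volume (A N) + volume (A N) := by
      calc (3:ℝ≥0∞) = 3/2 + 3/2 := (ENNReal.add_halves 3).symm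
      _ < _ := ENNReal.add_lt_add hN hN
    norm_num at hle
    exact absurd hle (not_le.2 this)
  obtain ⟨y, hyA, hyC⟩ := hinter
  have key1 : |h (s N + y) - h (s N)| ≤ ε/2 := by
    have := hyA.2; simp only [mem_iInter] at this
    exact (this N le_rfl).1
  have key2 : |h (s N + u N + (-u N + y)) - h (s N + u N)| ≤ ε/2 := by
    have h1 : -u N + y ∈ A N := hyC
    have := h1.2; simp only [mem_iInter] at this
    exact (this N le_rfl).2
  have heq : s N + u N + (-u N + y) = s N + y := by ring
  rw [heq] at key2
  have : |h (s N + u N) - h (s N)| ≤ ε := by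
    have := abs_sub (h (s N + u N)) (h (s N))
    calc |h (s N + u N) - h (s N)|
        = |(h (s N + u N) - h (s N + y)) + (h (s N + y) - h (s N))| := by ring_nf
      _ ≤ |h (s N + u N) - h (s N + y)| + |h (s N + y) - h (s N)| := abs_add_le _ _
      _ ≤ ε/2 + ε/2 := add_le_add (by rwa [abs_sub_comm]) key1
      _ = ε := by ring
  exact absurd this (not_le.2 (hgt N))

theorem potter (hm : Measurable ℓ) (hpos : ∀ x > 0, 0 < ℓ x) (hs : SlowlyVarying ℓ)
    {ε : ℝ} (hε : 0 < ε) :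
    ∃ C ≥ (1:ℝ), ∃ T ≥ (1:ℝ), ∀ t ≥ T, ∀ x ≥ (1:ℝ),
      ℓ (x * t) ≤ C * x ^ ε * ℓ t ∧ ℓ t ≤ C * x ^ ε * ℓ (x * t) := by
  set h : ℝ → ℝ := fun x => Real.log (ℓ (Real.exp x)) with hh
  obtain ⟨S, hS⟩ := uct hm hpos hs hε
  have chain : ∀ n : ℕ, ∀ s ≥ S, ∀ y : ℝ, 0 ≤ y → y ≤ (n:ℝ) + 1 →
      |h (s + y) - h s| ≤ ((n:ℝ) + 1) * ε := by
    intro n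
    induction n with
    | zero =>
      intro s hsS y hy0 hy1
      simpa using hS s hsS y ⟨hy0, by simpa using hy1⟩
    | succ n ih =>
      intro s hsS y hy0 hy1
      push_cast at hy1 ⊢
      rcases le_or_gt y ((n:ℝ) + 1) with hc | hc
      · calc |h (s + y) - h s| ≤ ((n:ℝ) + 1) * ε := ih s hsS y hy0 hc
          _ ≤ ((n:ℝ) + 1 + 1) * ε := by nlinarith [Nat.cast_nonneg (α := ℝ) n]
      · have hy1' : (1:ℝ) ≤ y := by
          have : (0:ℝ) ≤ (n:ℝ) := Nat.cast_nonneg n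
          linarith
        have h1 : |h ((s + 1) + (y - 1)) - h (s + 1)| ≤ ((n:ℝ) + 1) * ε :=
          ih (s + 1) (by linarith) (y - 1) (by linarith) (by linarith)
        have h2 : |h (s + 1) - h s| ≤ ε := hS s hsS 1 ⟨zero_le_one, le_rfl⟩
        have heq : (s + 1) + (y - 1) = s + y := by ring
        rw [heq] at h1
        calc |h (s + y) - h s| = |(h (s + y) - h (s + 1)) + (h (s + 1) - h s)| := by ring_nf
          _ ≤ |h (s + y) - h (s + 1)| + |h (s + 1) - h s| := abs_add_le _ _
          _ ≤ ((n:ℝ) + 1) * ε + ε := add_le_add h1 h2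
          _ = ((n:ℝ) + 1 + 1) * ε := by ring
  have key : ∀ s ≥ S, ∀ y, 0 ≤ y → |h (s + y) - h s| ≤ (y + 1) * ε := by
    intro s hsS y hy0
    have h1 := chain ⌊y⌋₊ s hsS y hy0 (by
      have := Nat.lt_floor_add_one y; push_cast; linarith)
    have h2 : ((⌊y⌋₊ : ℝ) + 1) * ε ≤ (y + 1) * ε := by
      have := Nat.floor_le hy0; nlinarith
    linarith
  refine ⟨Real.exp ε, Real.one_le_exp hε.le, max 1 (Real.exp S), le_max_left _ _, ?_⟩
  intro t ht x hx
  have ht0 : (0:ℝ) < t := lt_of_lt_of_le one_pos (le_trans (le_max_left _ _) ht)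
  have hx0 : (0:ℝ) < x := lt_of_lt_of_le one_pos hx
  have hsS : S ≤ Real.log t := by
    have h1 : Real.exp S ≤ t := le_trans (le_max_right _ _) ht
    have h2 := Real.log_le_log (Real.exp_pos S) h1
    rwa [Real.log_exp] at h2
  have hy0 : 0 ≤ Real.log x := Real.log_nonneg hx
  have hkey := key (Real.log t) hsS (Real.log x) hy0
  have hexp : Real.exp (Real.log t + Real.log x) = x * t := by
    rw [Real.exp_add, Real.exp_log ht0, Real.exp_log hx0]; ring
  have hht : h (Real.log t) = Real.log (ℓ t) := by rw [hh]; simp [Real.exp_log ht0]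
  have hhxt : h (Real.log t + Real.log x) = Real.log (ℓ (x * t)) := by rw [hh]; simp [hexp]
  rw [hhxt, hht] at hkey
  have habs := abs_le.1 hkey
  have hlt : 0 < ℓ t := hpos t ht0
  have hlxt : 0 < ℓ (x * t) := hpos _ (by positivity)
  have hxe : x ^ ε = Real.exp (Real.log x * ε) := Real.rpow_def_of_pos hx0 ε
  constructor
  · have hb : Real.log (ℓ (x*t)) ≤ Real.log (ℓ t) + (Real.log x + 1) * ε := by
      linarith [habs.2]
    calc ℓ (x*t) = Real.exp (Real.log (ℓ (x*t))) := (Real.exp_log hlxt).symm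
      _ ≤ Real.exp (Real.log (ℓ t) + (Real.log x + 1) * ε) := Real.exp_le_exp.2 hb
      _ = Real.exp (Real.log (ℓ t)) * (Real.exp ε * Real.exp (Real.log x * ε)) := by
          rw [← Real.exp_add, ← Real.exp_add]; congr 1; ring
      _ = Real.exp ε * x ^ ε * ℓ t := by rw [Real.exp_log hlt, hxe]; ring
  · have hb : Real.log (ℓ t) ≤ Real.log (ℓ (x*t)) + (Real.log x + 1) * ε := by
      linarith [habs.1]
    calc ℓ t = Real.exp (Real.log (ℓ t)) := (Real.exp_log hlt).symm
      _ ≤ Real.exp (Real.log (ℓ (x*t)) + (Real.log x + 1) * ε) := Real.exp_le_exp.2 hb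
      _ = Real.exp (Real.log (ℓ (x*t))) * (Real.exp ε * Real.exp (Real.log x * ε)) := by
          rw [← Real.exp_add, ← Real.exp_add]; congr 1; ring
      _ = Real.exp ε * x ^ ε * ℓ (x*t) := by rw [Real.exp_log hlxt, hxe]; ring

theorem ratio_bound {f : ℝ → ℝ} {a : ℝ} (hm : Measurable ℓ) (hpos : ∀ x > 0, 0 < ℓ x)
    (hs : SlowlyVarying ℓ) (ha : -1 < a)
    (hf_loc : ∀ T > 0, ∃ M, ∀ x ∈ Set.Ioc (0:ℝ) T, f x ≤ M)
    (hf_pos : ∀ x > 0, 0 < f x)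
    (hf_eq : ∀ x > 0, f x = ℓ x * x ^ a) :
    ∃ p : ℝ, -1 < p ∧ p ≤ 0 ∧ ∃ C > (0:ℝ), ∃ T ≥ (1:ℝ), ∀ t ≥ T, ∀ u : ℝ, 0 < u → u ≤ 1 →
      f (u * t) ≤ C * u ^ p * f t := by
  set ε := (a + 1) / 2 with hεdef
  have hε : 0 < ε := by rw [hεdef]; linarith
  obtain ⟨C₀, hC₀, T₀, hT₀, hpot⟩ := potter hm hpos hs hε
  have hT₀pos : (0:ℝ) < T₀ := lt_of_lt_of_le one_pos hT₀
  have hC₀pos : (0:ℝ) < C₀ := lt_of_lt_of_le one_pos hC₀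
  obtain ⟨M, hM⟩ := hf_loc T₀ hT₀pos
  have hM0 : 0 < M := (hf_pos T₀ hT₀pos).trans_le (hM T₀ ⟨hT₀pos, le_rfl⟩)
  set c := ℓ T₀ * T₀ ^ ε / C₀ with hcdef
  have hℓT₀ : 0 < ℓ T₀ := hpos T₀ hT₀pos
  have hc0 : 0 < c := by rw [hcdef]; positivity
  -- lower bound for f
  have flow : ∀ t ≥ T₀, c * t ^ (a - ε) ≤ f t := by
    intro t ht
    have ht0 : (0:ℝ) < t := lt_of_lt_of_le hT₀pos ht
    have hx1 : (1:ℝ) ≤ t / T₀ := (one_le_div hT₀pos).2 ht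
    have h1 := (hpot T₀ le_rfl (t / T₀) hx1).2
    rw [div_mul_cancel₀ _ hT₀pos.ne'] at h1
    -- h1 : ℓ T₀ ≤ C₀ * (t / T₀) ^ ε * ℓ t
    have hdiv : (t / T₀) ^ ε = t ^ ε / T₀ ^ ε := Real.div_rpow ht0.le hT₀pos.le ε
    rw [hdiv] at h1
    have hfe : f t = ℓ t * t ^ a := hf_eq t ht0
    have hsub : t ^ (a - ε) = t ^ a / t ^ ε := Real.rpow_sub ht0 a ε
    have htε : (0:ℝ) < t ^ ε := Real.rpow_pos_of_pos ht0 ε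
    have hT₀ε : (0:ℝ) < T₀ ^ ε := Real.rpow_pos_of_pos hT₀pos ε
    have hta : (0:ℝ) < t ^ a := Real.rpow_pos_of_pos ht0 a
    have hℓt : (0:ℝ) < ℓ t := hpos t ht0
    have h1' : ℓ T₀ * T₀ ^ ε ≤ C₀ * t ^ ε * ℓ t := by
      have h2 := mul_le_mul_of_nonneg_right h1 hT₀ε.le
      have h3 : C₀ * (t ^ ε / T₀ ^ ε) * ℓ t * T₀ ^ ε = C₀ * t ^ ε * ℓ t := by
        field_simp
      linarith [h3.le, h3.ge]
    rw [hfe, hsub, hcdef, div_mul_div_comm, div_le_iff₀ (by positivity : (0:ℝ) < C₀ * t ^ ε)]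
    nlinarith [mul_le_mul_of_nonneg_right h1' hta.le]
  -- potter-case estimate
  have hbig : ∀ t ≥ T₀, ∀ u : ℝ, 0 < u → u ≤ 1 → T₀ ≤ u * t →
      f (u * t) ≤ C₀ * u ^ (a - ε) * f t := by
    intro t ht u hu0 hu1 hut
    have ht0 : (0:ℝ) < t := lt_of_lt_of_le hT₀pos ht
    have hut0 : (0:ℝ) < u * t := mul_pos hu0 ht0
    have hx1 : (1:ℝ) ≤ 1 / u := by rw [le_div_iff₀ hu0]; linarith
    have h1 := (hpot (u * t) hut (1 / u) hx1).2
    have heq : (1 / u) * (u * t) = t := by field_simp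
    rw [heq] at h1
    -- h1 : ℓ (u*t) ≤ C₀ * (1/u) ^ ε * ℓ t
    have hinv : (1 / u) ^ ε = (u ^ ε)⁻¹ := by
      rw [one_div, Real.inv_rpow hu0.le]
    rw [hinv] at h1
    have hfe1 : f (u * t) = ℓ (u * t) * (u * t) ^ a := hf_eq _ hut0
    have hfe2 : f t = ℓ t * t ^ a := hf_eq t ht0
    have hmulr : (u * t) ^ a = u ^ a * t ^ a := Real.mul_rpow hu0.le ht0.le
    have hsub : u ^ (a - ε) = u ^ a / u ^ ε := Real.rpow_sub hu0 a ε
    rw [hfe1, hfe2, hmulr, hsub]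
    have huε : (0:ℝ) < u ^ ε := Real.rpow_pos_of_pos hu0 ε
    have hua : (0:ℝ) < u ^ a := Real.rpow_pos_of_pos hu0 a
    have hta : (0:ℝ) < t ^ a := Real.rpow_pos_of_pos ht0 a
    have hℓut : (0:ℝ) < ℓ (u * t) := hpos _ hut0
    have h2 : ℓ (u * t) * u ^ ε ≤ C₀ * ℓ t := by
      have h3 := mul_le_mul_of_nonneg_right h1 huε.le
      calc ℓ (u * t) * u ^ ε ≤ C₀ * (u ^ ε)⁻¹ * ℓ t * u ^ ε := h3
        _ = C₀ * ℓ t := by field_simp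
    calc ℓ (u * t) * (u ^ a * t ^ a)
        = (ℓ (u * t) * u ^ ε) * (u ^ a / u ^ ε * t ^ a) := by field_simp
      _ ≤ (C₀ * ℓ t) * (u ^ a / u ^ ε * t ^ a) := by
          apply mul_le_mul_of_nonneg_right h2; positivity
      _ = C₀ * (u ^ a / u ^ ε) * (ℓ t * t ^ a) := by ring
  rcases le_or_gt 0 (a - ε) with hcase | hcase
  · -- p = 0
    refine ⟨0, by norm_num, le_rfl, max C₀ (M / c), lt_of_lt_of_le hC₀pos (le_max_left _ _),
      T₀, hT₀, ?_⟩
    intro t ht u hu0 hu1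
    have ht0 : (0:ℝ) < t := lt_of_lt_of_le hT₀pos ht
    have hft : 0 < f t := hf_pos t ht0
    rw [Real.rpow_zero, mul_one]
    rcases le_or_gt T₀ (u * t) with hh | hh
    · have h1 := hbig t ht u hu0 hu1 hh
      have h2 : u ^ (a - ε) ≤ 1 := Real.rpow_le_one hu0.le hu1 hcase
      calc f (u * t) ≤ C₀ * u ^ (a - ε) * f t := h1
        _ ≤ C₀ * 1 * f t := by
            apply mul_le_mul_of_nonneg_right _ hft.le
            exact mul_le_mul_of_nonneg_left h2 hC₀pos.le
        _ ≤ max C₀ (M / c) * f t := by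
            rw [mul_one]
            exact mul_le_mul_of_nonneg_right (le_max_left _ _) hft.le
    · have h1 : f (u * t) ≤ M := hM _ ⟨mul_pos hu0 ht0, hh.le⟩
      have h2 : c ≤ f t := by
        have h3 := flow t ht
        have h4 : (1:ℝ) ≤ t ^ (a - ε) := Real.one_le_rpow (le_trans hT₀ ht) hcase
        nlinarith
      calc f (u * t) ≤ M := h1
        _ = (M / c) * c := by field_simp
        _ ≤ max C₀ (M / c) * f t := by
            apply mul_le_mul (le_max_right _ _) h2 hc0.le
            exact le_trans hC₀pos.le (le_max_left _ _)
  · -- p = a - ε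
    have hp1 : (-1:ℝ) < a - ε := by rw [hεdef]; linarith
    set C := max C₀ (M / (c * T₀ ^ (a - ε))) with hCdef
    have hT₀p : (0:ℝ) < T₀ ^ (a - ε) := Real.rpow_pos_of_pos hT₀pos _
    have hCpos : (0:ℝ) < C := lt_of_lt_of_le hC₀pos (le_max_left _ _)
    refine ⟨a - ε, hp1, hcase.le, C, hCpos, T₀, hT₀, ?_⟩
    intro t ht u hu0 hu1
    have ht0 : (0:ℝ) < t := lt_of_lt_of_le hT₀pos ht
    have hft : 0 < f t := hf_pos t ht0
    have hup : (0:ℝ) < u ^ (a - ε) := Real.rpow_pos_of_pos hu0 _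
    rcases le_or_gt T₀ (u * t) with hh | hh
    · have h1 := hbig t ht u hu0 hu1 hh
      calc f (u * t) ≤ C₀ * u ^ (a - ε) * f t := h1
        _ ≤ C * u ^ (a - ε) * f t := by
            apply mul_le_mul_of_nonneg_right _ hft.le
            exact mul_le_mul_of_nonneg_right (le_max_left _ _) hup.le
    · have h1 : f (u * t) ≤ M := hM _ ⟨mul_pos hu0 ht0, hh.le⟩
      have hule : u ≤ T₀ / t := by rw [le_div_iff₀ ht0]; exact hh.le
      have e1 : (T₀ / t) ^ (a - ε) ≤ u ^ (a - ε) :=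
        Real.rpow_le_rpow_of_nonpos hu0 hule hcase.le
      have e2 : (T₀ / t) ^ (a - ε) = T₀ ^ (a - ε) / t ^ (a - ε) :=
        Real.div_rpow hT₀pos.le ht0.le (a - ε)
      have ftp := flow t ht
      have htp : (0:ℝ) < t ^ (a - ε) := Real.rpow_pos_of_pos ht0 _
      have h5 : (M / (c * T₀ ^ (a - ε))) * (T₀ ^ (a - ε) / t ^ (a - ε)) ≤ C * u ^ (a - ε) := by
        apply mul_le_mul (le_max_right _ _) (e2 ▸ e1) (by positivity) hCpos.le
      have h6 : (M / (c * T₀ ^ (a - ε))) * (T₀ ^ (a - ε) / t ^ (a - ε)) * (c * t ^ (a - ε))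
          ≤ C * u ^ (a - ε) * f t :=
        mul_le_mul h5 ftp (by positivity) (by positivity)
      calc f (u * t) ≤ M := h1
        _ = (M / (c * T₀ ^ (a - ε))) * (T₀ ^ (a - ε) / t ^ (a - ε)) * (c * t ^ (a - ε)) := by
            field_simp
        _ ≤ C * u ^ (a - ε) * f t := h6

theorem beta_integrable {p q : ℝ} (hp : -1 < p) (hq : -1 < q) :
    IntervalIntegrable (fun u : ℝ => u ^ p * (1 - u) ^ q) volume 0 1 := by
  have hc := Complex.betaIntegral_convergent (u := (p:ℂ) + 1) (v := (q:ℂ) + 1)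
    (by simp; linarith) (by simp; linarith)
  simp only [add_sub_cancel_right] at hc
  have hnorm := hc.norm
  rw [intervalIntegrable_iff] at hnorm ⊢
  have h01 : Set.uIoc (0:ℝ) 1 = Ioc (0:ℝ) 1 := uIoc_of_le zero_le_one
  rw [h01] at hnorm ⊢
  refine hnorm.congr_fun_ae ?_
  rw [EventuallyEq, ae_restrict_iff' measurableSet_Ioc]
  have h1 : ∀ᵐ x : ℝ, x ≠ 1 := by
    rw [ae_iff]
    have : {x : ℝ | ¬ x ≠ 1} = {1} := by ext x; simp
    rw [this]
    exact Real.volume_singleton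
  filter_upwards [h1] with x hx1 hx
  have hx0 : 0 < x := hx.1
  have hxlt : x < 1 := lt_of_le_of_ne hx.2 hx1
  have h1x : 0 < 1 - x := by linarith
  rw [norm_mul]
  have e1 : ‖(x:ℂ) ^ (p:ℂ)‖ = x ^ p := by
    rw [Complex.norm_cpow_eq_rpow_re_of_pos hx0]
    simp
  have e2 : ‖(1 - (x:ℂ)) ^ (q:ℂ)‖ = (1 - x) ^ q := by
    have : (1 - (x:ℂ)) = ((1 - x : ℝ) : ℂ) := by push_cast; ring
    rw [this, Complex.norm_cpow_eq_rpow_re_of_pos h1x]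
    simp
  rw [e1, e2]

theorem beta_value {a b : ℝ} (ha : -1 < a) (hb : -1 < b) :
    ∫ u in (0:ℝ)..1, u ^ a * (1 - u) ^ b =
      Real.Gamma (a + 1) * Real.Gamma (b + 1) / Real.Gamma (a + b + 2) := by
  have h := Complex.Gamma_mul_Gamma_eq_betaIntegral (s := (a:ℂ) + 1) (t := (b:ℂ) + 1)
    (by simp; linarith) (by simp; linarith)
  have hbeta : Complex.betaIntegral ((a:ℂ) + 1) ((b:ℂ) + 1)
      = ((∫ u in (0:ℝ)..1, u ^ a * (1 - u) ^ b : ℝ) : ℂ) := by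
    rw [Complex.betaIntegral, ← intervalIntegral.integral_ofReal]
    apply intervalIntegral.integral_congr
    intro x hx
    rw [uIcc_of_le zero_le_one] at hx
    have hx0 : (0:ℝ) ≤ x := hx.1
    have hx1 : (0:ℝ) ≤ 1 - x := by linarith [hx.2]
    simp only [add_sub_cancel_right]
    rw [Complex.ofReal_mul, Complex.ofReal_cpow hx0, Complex.ofReal_cpow hx1]
    push_cast
    ring
  rw [hbeta] at h
  have hg1 : Complex.Gamma ((a:ℂ) + 1) = ((Real.Gamma (a + 1) : ℝ) : ℂ) := by
    rw [show ((a:ℂ) + 1) = ((a + 1 : ℝ) : ℂ) by push_cast; ring, Complex.Gamma_ofReal]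
  have hg2 : Complex.Gamma ((b:ℂ) + 1) = ((Real.Gamma (b + 1) : ℝ) : ℂ) := by
    rw [show ((b:ℂ) + 1) = ((b + 1 : ℝ) : ℂ) by push_cast; ring, Complex.Gamma_ofReal]
  have hg3 : Complex.Gamma ((a:ℂ) + 1 + ((b:ℂ) + 1)) = ((Real.Gamma (a + b + 2) : ℝ) : ℂ) := by
    rw [show ((a:ℂ) + 1 + ((b:ℂ) + 1)) = ((a + b + 2 : ℝ) : ℂ) by push_cast; ring,
      Complex.Gamma_ofReal]
  rw [hg1, hg2, hg3] at h
  have hre : Real.Gamma (a + 1) * Real.Gamma (b + 1)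
      = Real.Gamma (a + b + 2) * ∫ u in (0:ℝ)..1, u ^ a * (1 - u) ^ b := by
    have := h
    rw [← Complex.ofReal_mul, ← Complex.ofReal_mul] at this
    exact_mod_cast this
  have hΓpos : 0 < Real.Gamma (a + b + 2) := Real.Gamma_pos_of_pos (by linarith)
  rw [eq_div_iff hΓpos.ne']
  linarith [hre]

end SVAux

/-- Lemma 2 of the paper: if `f(x) = ℓ_f(x) x^a` and `g(x) = ℓ_g(x) x^b` with `a, b > -1`
and `ℓ_f, ℓ_g` slowly varying, and `f, g` locally bounded, then
`∫₀ᵗ f(x) g(t-x) dx ~ (Γ(a+1)Γ(b+1)/Γ(a+b+2)) t f(t) g(t)` as `t → ∞`. -/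
theorem convolution_regularly_varying
    (a b : ℝ) (ha : -1 < a) (hb : -1 < b)
    (ℓf ℓg f g : ℝ → ℝ)
    (hℓf_meas : Measurable ℓf) (hℓg_meas : Measurable ℓg)
    (hℓf_pos : ∀ x > 0, 0 < ℓf x) (hℓg_pos : ∀ x > 0, 0 < ℓg x)
    (hℓf : SlowlyVarying ℓf) (hℓg : SlowlyVarying ℓg)
    (hf_meas : Measurable f) (hg_meas : Measurable g)
    (hf_pos : ∀ x > 0, 0 < f x) (hg_pos : ∀ x > 0, 0 < g x)
    (hf_loc : ∀ T > 0, ∃ M, ∀ x ∈ Set.Ioc (0:ℝ) T, f x ≤ M)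
    (hg_loc : ∀ T > 0, ∃ M, ∀ x ∈ Set.Ioc (0:ℝ) T, g x ≤ M)
    (hf_eq : ∀ x > 0, f x = ℓf x * x ^ a)
    (hg_eq : ∀ x > 0, g x = ℓg x * x ^ b) :
    Filter.Tendsto
      (fun t => (∫ x in (0:ℝ)..t, f x * g (t - x)) /
        (Real.Gamma (a + 1) * Real.Gamma (b + 1) / Real.Gamma (a + b + 2) *
          (t * f t * g t)))
      Filter.atTop (nhds 1) := by
  have hae1 : ∀ᵐ x : ℝ, x ≠ 1 := by
    rw [ae_iff]
    have he : {x : ℝ | ¬ x ≠ 1} = {1} := by ext x; simp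
    rw [he]
    exact Real.volume_singleton
  set K := Real.Gamma (a + 1) * Real.Gamma (b + 1) / Real.Gamma (a + b + 2) with hK
  have hKpos : 0 < K := by
    rw [hK]
    exact div_pos (mul_pos (Real.Gamma_pos_of_pos (by linarith))
      (Real.Gamma_pos_of_pos (by linarith))) (Real.Gamma_pos_of_pos (by linarith))
  obtain ⟨pf, hpf1, hpf0, Cf, hCf, Tf, hTf, hratf⟩ :=
    SVAux.ratio_bound hℓf_meas hℓf_pos hℓf ha hf_loc hf_pos hf_eq
  obtain ⟨pg, hpg1, hpg0, Cg, hCg, Tg, hTg, hratg⟩ :=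
    SVAux.ratio_bound hℓg_meas hℓg_pos hℓg hb hg_loc hg_pos hg_eq
  set J : ℝ → ℝ := fun t => ∫ u in (0:ℝ)..1, (f (u * t) * g ((1 - u) * t)) / (f t * g t)
    with hJ
  -- Step A : J tends to K
  have hJlim : Tendsto J atTop (nhds K) := by
    rw [hK, ← SVAux.beta_value ha hb]
    apply intervalIntegral.tendsto_integral_filter_of_dominated_convergence
      (bound := fun u : ℝ => (Cf * u ^ pf) * (Cg * (1 - u) ^ pg))
    · filter_upwards [eventually_ge_atTop (1:ℝ)] with t ht
      apply Measurable.aestronglyMeasurable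
      exact ((hf_meas.comp (measurable_id.mul_const t)).mul
        (hg_meas.comp ((measurable_const.sub measurable_id).mul_const t))).div_const _
    · filter_upwards [eventually_ge_atTop (max 1 (max Tf Tg))] with t ht
      have ht1 : (1:ℝ) ≤ t := le_trans (le_max_left _ _) ht
      have ht0 : (0:ℝ) < t := lt_of_lt_of_le one_pos ht1
      have htf : Tf ≤ t := le_trans ((le_max_left _ _).trans (le_max_right _ _)) ht
      have htg : Tg ≤ t := le_trans ((le_max_right _ _).trans (le_max_right _ _)) ht
      filter_upwards [hae1] with u hu1 hu
      rw [uIoc_of_le zero_le_one] at hu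
      have hu0 : 0 < u := hu.1
      have hult : u < 1 := lt_of_le_of_ne hu.2 hu1
      have h1u : 0 < 1 - u := by linarith
      have hft : 0 < f t := hf_pos t ht0
      have hgt : 0 < g t := hg_pos t ht0
      have hfut : 0 < f (u * t) := hf_pos _ (mul_pos hu0 ht0)
      have hgut : 0 < g ((1 - u) * t) := hg_pos _ (mul_pos h1u ht0)
      have hf1 : f (u * t) ≤ Cf * u ^ pf * f t := hratf t htf u hu0 hult.le
      have hg1 : g ((1 - u) * t) ≤ Cg * (1 - u) ^ pg * g t :=
        hratg t htg (1 - u) h1u (by linarith)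
      rw [Real.norm_eq_abs, abs_of_nonneg (by positivity)]
      rw [div_le_iff₀ (by positivity)]
      calc f (u * t) * g ((1 - u) * t)
          ≤ (Cf * u ^ pf * f t) * (Cg * (1 - u) ^ pg * g t) :=
            mul_le_mul hf1 hg1 hgut.le (by positivity)
        _ = (Cf * u ^ pf) * (Cg * (1 - u) ^ pg) * (f t * g t) := by ring
    · have hfe : (fun u : ℝ => (Cf * u ^ pf) * (Cg * (1 - u) ^ pg))
          = fun x : ℝ => Cf * Cg * (x ^ pf * (1 - x) ^ pg) := by
        funext x; ring
      rw [hfe]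
      exact (SVAux.beta_integrable hpf1 hpg1).const_mul (Cf * Cg)
    · filter_upwards [hae1] with u hu1 hu
      rw [uIoc_of_le zero_le_one] at hu
      have hu0 : 0 < u := hu.1
      have hult : u < 1 := lt_of_le_of_ne hu.2 hu1
      have h1u : 0 < 1 - u := by linarith
      have e : ∀ᶠ t : ℝ in atTop,
          (f (u * t) * g ((1 - u) * t)) / (f t * g t)
          = (ℓf (u * t) / ℓf t * u ^ a) * (ℓg ((1 - u) * t) / ℓg t * (1 - u) ^ b) := by
        filter_upwards [eventually_gt_atTop (0:ℝ)] with t ht0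
        have hut0 : 0 < u * t := mul_pos hu0 ht0
        have h1ut0 : 0 < (1 - u) * t := mul_pos h1u ht0
        rw [hf_eq _ hut0, hf_eq t ht0, hg_eq _ h1ut0, hg_eq t ht0,
          Real.mul_rpow hu0.le ht0.le, Real.mul_rpow h1u.le ht0.le]
        have h1 : ℓf t ≠ 0 := (hℓf_pos t ht0).ne'
        have h2 : ℓg t ≠ 0 := (hℓg_pos t ht0).ne'
        have h3 : t ^ a ≠ 0 := (Real.rpow_pos_of_pos ht0 a).ne'
        have h4 : t ^ b ≠ 0 := (Real.rpow_pos_of_pos ht0 b).ne'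
        field_simp
      have lim : Tendsto (fun t : ℝ =>
          (ℓf (u * t) / ℓf t * u ^ a) * (ℓg ((1 - u) * t) / ℓg t * (1 - u) ^ b))
          atTop (nhds ((1 * u ^ a) * (1 * (1 - u) ^ b))) :=
        ((hℓf u hu0).mul_const _).mul ((hℓg (1 - u) h1u).mul_const _)
      have lim2 := Filter.Tendsto.congr' (EventuallyEq.symm e) lim
      simpa using lim2
  -- Step B : eventual equality
  have heq : ∀ᶠ t : ℝ in atTop,
      (∫ x in (0:ℝ)..t, f x * g (t - x)) / (K * (t * f t * g t)) = J t / K := by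
    filter_upwards [eventually_gt_atTop (0:ℝ)] with t ht0
    have hft : 0 < f t := hf_pos t ht0
    have hgt : 0 < g t := hg_pos t ht0
    have hsub := intervalIntegral.integral_comp_mul_left
      (a := (0:ℝ)) (b := 1) (c := t) (f := fun x => f x * g (t - x)) ht0.ne'
    simp only [mul_zero, mul_one, smul_eq_mul] at hsub
    -- hsub : ∫ u in 0..1, f (t*u) * g (t - t*u) = t⁻¹ * ∫ x in 0..t, f x * g (t-x)
    have hcong : (∫ u in (0:ℝ)..1, f (u * t) * g ((1 - u) * t))
        = ∫ u in (0:ℝ)..1, f (t * u) * g (t - t * u) := by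
      apply intervalIntegral.integral_congr
      intro x _
      have e1 : x * t = t * x := mul_comm x t
      have e2 : (1 - x) * t = t - t * x := by ring
      show f (x * t) * g ((1 - x) * t) = f (t * x) * g (t - t * x)
      rw [e1, e2]
    have hJt : J t = (∫ u in (0:ℝ)..1, f (u * t) * g ((1 - u) * t)) / (f t * g t) := by
      rw [hJ]
      exact intervalIntegral.integral_div _ _
    rw [hJt, hcong, hsub]
    field_simp [ht0.ne', hft.ne', hgt.ne', hKpos.ne']
  have hfinal := hJlim.div_const K
  rw [div_self hKpos.ne'] at hfinal
  exact Filter.Tendsto.congr' (EventuallyEq.symm heq) hfinal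
end
end

section
/- Let ρ be a Borel measure on (0,∞) with ρ((0,∞)) = ∞, with tail intensity ρ̄(x) = ρ((x,∞)) finite for every x > 0, and suppose ρ̄(x) ~ ℓ(1/x)·x^{−σ} as x → 0⁺, where σ ∈ [0,1) and ℓ is slowly varying at infinity. Then the Laplace exponent ψ(t) = ∫₀^∞ (1 − e^{−ωt}) ρ(dω) satisfies ψ(t) ~ Γ(1−σ) t^σ ℓ(t) as t → ∞. -/
open MeasureTheory Filter Set
open scoped ENNReal

noncomputable section

namespace LaplaceAux

variable {ρ : Measure ℝ}

lemma measurable_rhob (ρ : Measure ℝ) : Measurable (fun x : ℝ => (ρ (Ioi x)).toReal) :=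
by
  have h : Antitone fun x : ℝ => ρ (Ioi x) := fun _ _ hab => measure_mono (Ioi_subset_Ioi hab)
  exact ENNReal.measurable_toReal.comp h.measurable

lemma intarg (t ω : ℝ) : ∫ s in (0:ℝ)..ω, t * Real.exp (-s * t) = 1 - Real.exp (-ω * t) := by
  have key : ∀ s : ℝ, HasDerivAt (fun s : ℝ => -Real.exp (-s * t)) (t * Real.exp (-s * t)) s := by
    intro s
    have h1 : HasDerivAt (fun s : ℝ => -s * t) (-t) s := by
      simpa using ((hasDerivAt_id s).neg.mul_const t)
    have h2 := (Real.hasDerivAt_exp (-s * t)).comp s h1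
    have h3 := h2.neg
    exact h3.congr_deriv (by ring)
  rw [intervalIntegral.integral_eq_sub_of_hasDerivAt (fun x _ => key x)
    (by apply Continuous.intervalIntegrable; continuity)]
  simp [Real.exp_zero]
  ring

lemma layer (ρ : Measure ℝ) {t : ℝ} (ht : 0 < t) :
    ∫⁻ ω in Ioi (0:ℝ), ENNReal.ofReal (1 - Real.exp (-ω * t)) ∂ρ
      = ∫⁻ s in Ioi (0:ℝ), ρ (Ioi s) * ENNReal.ofReal (t * Real.exp (-s * t)) := by
  have f_nn : 0 ≤ᵐ[ρ.restrict (Ioi (0:ℝ))] (fun ω : ℝ => ω) := by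
    filter_upwards [ae_restrict_mem measurableSet_Ioi] with ω hω using le_of_lt hω
  have key := lintegral_comp_eq_lintegral_meas_lt_mul (μ := ρ.restrict (Ioi (0:ℝ)))
    (f := fun ω : ℝ => ω) (g := fun s => t * Real.exp (-s * t)) f_nn
    aemeasurable_id
    (fun r _ => (by apply Continuous.intervalIntegrable; continuity))
    (by
      filter_upwards [ae_restrict_mem measurableSet_Ioi] with s _
      positivity)
  calc ∫⁻ ω in Ioi (0:ℝ), ENNReal.ofReal (1 - Real.exp (-ω * t)) ∂ρ
      = ∫⁻ ω, ENNReal.ofReal (∫ s in (0:ℝ)..ω, t * Real.exp (-s * t))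
          ∂(ρ.restrict (Ioi (0:ℝ))) := by
        apply lintegral_congr; intro ω; rw [intarg]
    _ = ∫⁻ s in Ioi (0:ℝ),
          (ρ.restrict (Ioi (0:ℝ))) {a : ℝ | s < a} * ENNReal.ofReal (t * Real.exp (-s * t)) := key
    _ = ∫⁻ s in Ioi (0:ℝ), ρ (Ioi s) * ENNReal.ofReal (t * Real.exp (-s * t)) := by
        apply setLIntegral_congr_fun measurableSet_Ioi
        intro s hs
        dsimp only
        have : {a : ℝ | s < a} = Ioi s := rfl
        rw [this, Measure.restrict_apply measurableSet_Ioi,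
          inter_eq_self_of_subset_left (Ioi_subset_Ioi (le_of_lt hs))]

lemma subst (ρ : Measure ℝ) {t : ℝ} (ht : 0 < t) :
    ∫⁻ s in Ioi (0:ℝ), ρ (Ioi s) * ENNReal.ofReal (t * Real.exp (-s * t))
      = ∫⁻ u in Ioi (0:ℝ), ρ (Ioi (u / t)) * ENNReal.ofReal (Real.exp (-u)) := by
  set g : ℝ → ℝ≥0∞ := fun u => ρ (Ioi (u / t)) * ENNReal.ofReal (Real.exp (-u)) with hg_def
  have hg : Measurable g := by
    have h : Antitone fun x : ℝ => ρ (Ioi x) := fun _ _ hab => measure_mono (Ioi_subset_Ioi hab)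
    exact (h.measurable.comp (measurable_id.div_const t)).mul
      (ENNReal.measurable_ofReal.comp (Real.continuous_exp.comp continuous_neg).measurable)
  have hmap : Measure.map (fun s : ℝ => t * s) (volume.restrict (Ioi (0:ℝ)))
      = ENNReal.ofReal t⁻¹ • volume.restrict (Ioi (0:ℝ)) := by
    have h0 : (fun s : ℝ => t * s) ⁻¹' (Ioi 0) = Ioi 0 := by
      rw [preimage_const_mul_Ioi₀ _ ht, zero_div]
    conv_lhs => rw [← h0]
    rw [← Measure.restrict_map (measurable_const_mul t) measurableSet_Ioi,
      Real.map_volume_mul_left ht.ne', Measure.restrict_smul, abs_of_pos (inv_pos.mpr ht)]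
  have key : ∫⁻ s in Ioi (0:ℝ), g (t * s) = ENNReal.ofReal t⁻¹ * ∫⁻ u in Ioi (0:ℝ), g u := by
    rw [← lintegral_map hg (measurable_const_mul t), hmap, lintegral_smul_measure, smul_eq_mul]
  have hts : ∀ s : ℝ, g (t * s) = ρ (Ioi s) * ENNReal.ofReal (Real.exp (-s * t)) := by
    intro s
    rw [hg_def]
    simp only []
    rw [mul_div_cancel_left₀ _ ht.ne']
    ring_nf
  calc ∫⁻ s in Ioi (0:ℝ), ρ (Ioi s) * ENNReal.ofReal (t * Real.exp (-s * t))
      = ∫⁻ s in Ioi (0:ℝ), ENNReal.ofReal t * g (t * s) := by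
        apply lintegral_congr; intro s
        rw [hts, ENNReal.ofReal_mul (le_of_lt ht)]
        ring
    _ = ENNReal.ofReal t * ∫⁻ s in Ioi (0:ℝ), g (t * s) :=
        lintegral_const_mul' _ _ ENNReal.ofReal_ne_top
    _ = (ENNReal.ofReal t * ENNReal.ofReal t⁻¹) * ∫⁻ u in Ioi (0:ℝ), g u := by
        rw [key, mul_assoc]
    _ = ∫⁻ u in Ioi (0:ℝ), g u := by
        rw [← ENNReal.ofReal_mul (le_of_lt ht), mul_inv_cancel₀ ht.ne', ENNReal.ofReal_one, one_mul]

lemma repr_key (ρ : Measure ℝ) (hρ_tail : ∀ x > (0:ℝ), ρ (Ioi x) < ⊤) {t : ℝ} (ht : 0 < t) :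
    ∫ ω in Ioi (0:ℝ), (1 - Real.exp (-ω * t)) ∂ρ
      = ∫ u in Ioi (0:ℝ), Real.exp (-u) * (ρ (Ioi (u / t))).toReal := by
  have h1 : ∫ ω in Ioi (0:ℝ), (1 - Real.exp (-ω * t)) ∂ρ
      = (∫⁻ ω in Ioi (0:ℝ), ENNReal.ofReal (1 - Real.exp (-ω * t)) ∂ρ).toReal := by
    apply integral_eq_lintegral_of_nonneg_ae
    · filter_upwards [ae_restrict_mem measurableSet_Ioi] with ω hω
      have : Real.exp (-ω * t) ≤ 1 := by
        rw [Real.exp_le_one_iff]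
        nlinarith [mem_Ioi.mp hω]
      simp only [Pi.zero_apply]
      linarith
    · exact (Continuous.aestronglyMeasurable (by continuity))
  have h2 : ∫ u in Ioi (0:ℝ), Real.exp (-u) * (ρ (Ioi (u / t))).toReal
      = (∫⁻ u in Ioi (0:ℝ), ρ (Ioi (u / t)) * ENNReal.ofReal (Real.exp (-u))).toReal := by
    rw [integral_eq_lintegral_of_nonneg_ae]
    · congr 1
      apply setLIntegral_congr_fun measurableSet_Ioi
      intro u hu
      dsimp only
      rw [ENNReal.ofReal_mul (le_of_lt (Real.exp_pos _)),
        ENNReal.ofReal_toReal (hρ_tail (u / t) (div_pos hu ht)).ne, mul_comm]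
    · filter_upwards with u
      simp only [Pi.zero_apply]
      positivity
    · exact ((Real.continuous_exp.comp continuous_neg).measurable.mul
        ((ENNReal.measurable_toReal.comp
          (by
            have h : Antitone fun x : ℝ => ρ (Ioi x) :=
              fun _ _ hab => measure_mono (Ioi_subset_Ioi hab)
            exact h.measurable)).comp (measurable_id.div_const t))).aestronglyMeasurable
  rw [h1, h2, layer ρ ht, subst ρ ht]

lemma potter (ρ : Measure ℝ) (ℓ : ℝ → ℝ) (σ : ℝ)
    (hσ0 : 0 ≤ σ) (hσ1 : σ < 1)
    (hℓ_pos : ∀ x > (0:ℝ), 0 < ℓ x) (hℓ : SlowlyVarying ℓ)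
    (hρ_tail : ∀ x > (0:ℝ), ρ (Ioi x) < ⊤)
    (hρ_asym : Filter.Tendsto
      (fun x => (ρ (Set.Ioi x)).toReal / (ℓ (1 / x) * x ^ (-σ)))
      (nhdsWithin 0 (Set.Ioi (0:ℝ))) (nhds 1)) :
    ∃ T : ℝ, 1 ≤ T ∧ ∀ t : ℝ, T ≤ t → ∀ u : ℝ, 0 < u →
      (ρ (Ioi (u / t))).toReal ≤ 2 * (t ^ σ * ℓ t) * (1 + (2 / u) ^ ((1 + σ) / 2)) := by
  set β : ℝ := (1 - σ) / 2 with hβ_def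
  set τ : ℝ := (1 + σ) / 2 with hτ_def
  have hβ_pos : 0 < β := by rw [hβ_def]; linarith
  have hτ_pos : 0 < τ := by rw [hτ_def]; linarith
  set c : ℝ := (2:ℝ) ^ β with hc_def
  have hc1 : 1 < c := by
    rw [hc_def, Real.one_lt_rpow_iff_of_pos (by norm_num)]
    left; exact ⟨by norm_num, hβ_pos⟩
  have hc0 : 0 < c := lt_trans one_pos hc1
  -- doubling bound
  obtain ⟨T₁', hT₁'⟩ := eventually_atTop.mp ((hℓ 2 (by norm_num)).eventually_lt_const hc1)
  set T₁ : ℝ := max T₁' 1 with hT₁_def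
  have hT₁_one : (1:ℝ) ≤ T₁ := le_max_right _ _
  have hdbl : ∀ t : ℝ, T₁ ≤ t → ℓ (2 * t) ≤ c * ℓ t := by
    intro t ht
    have h1 : ℓ (2 * t) / ℓ t < c := hT₁' t (le_trans (le_max_left _ _) ht)
    have hℓt : 0 < ℓ t := hℓ_pos t (lt_of_lt_of_le one_pos (le_trans hT₁_one ht))
    calc ℓ (2 * t) = ℓ (2 * t) / ℓ t * ℓ t := by field_simp
      _ ≤ c * ℓ t := by nlinarith
  have hdbl_pow : ∀ t : ℝ, T₁ ≤ t → ∀ n : ℕ, ℓ ((2:ℝ) ^ n * t) ≤ c ^ n * ℓ t := by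
    intro t ht n
    induction n with
    | zero => simp
    | succ n ih =>
      have h2n : (1:ℝ) ≤ 2 ^ n := one_le_pow₀ (by norm_num)
      have htpos : 0 < t := lt_of_lt_of_le one_pos (le_trans hT₁_one ht)
      have hstep : ℓ (2 * ((2:ℝ) ^ n * t)) ≤ c * ℓ ((2:ℝ) ^ n * t) :=
        hdbl _ (le_trans ht (le_mul_of_one_le_left (le_of_lt htpos) h2n))
      have heq : (2:ℝ) ^ (n + 1) * t = 2 * ((2:ℝ) ^ n * t) := by ring
      rw [heq]
      calc ℓ (2 * ((2:ℝ) ^ n * t)) ≤ c * ℓ ((2:ℝ) ^ n * t) := hstep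
        _ ≤ c * (c ^ n * ℓ t) := by nlinarith
        _ = c ^ (n + 1) * ℓ t := by ring
  -- asymptotic upper bound near zero
  have h2' : ∀ᶠ x in nhdsWithin 0 (Ioi (0:ℝ)),
      (ρ (Ioi x)).toReal / (ℓ (1 / x) * x ^ (-σ)) < 2 :=
    hρ_asym.eventually_lt_const one_lt_two
  rw [eventually_nhdsWithin_iff] at h2'
  obtain ⟨ε, hε_pos, hε⟩ := Metric.eventually_nhds_iff.mp h2'
  have hA : ∀ x : ℝ, 0 < x → x ≤ ε / 2 → (ρ (Ioi x)).toReal ≤ 2 * (ℓ (1 / x) * x ^ (-σ)) := by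
    intro x hx hxε
    have hdist : dist x 0 < ε := by
      rw [Real.dist_eq, sub_zero, abs_of_pos hx]; linarith
    have hratio := hε hdist (mem_Ioi.mpr hx)
    have hden : 0 < ℓ (1 / x) * x ^ (-σ) :=
      mul_pos (hℓ_pos _ (by positivity)) (Real.rpow_pos_of_pos hx _)
    calc (ρ (Ioi x)).toReal
        = (ρ (Ioi x)).toReal / (ℓ (1 / x) * x ^ (-σ)) * (ℓ (1 / x) * x ^ (-σ)) := by rw [div_mul_cancel₀ _ hden.ne']
      _ ≤ 2 * (ℓ (1 / x) * x ^ (-σ)) := by nlinarith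
  refine ⟨max T₁ (2 / ε), le_trans hT₁_one (le_max_left _ _), ?_⟩
  intro t ht u hu
  have htT₁ : T₁ ≤ t := le_trans (le_max_left _ _) ht
  have ht1 : (1:ℝ) ≤ t := le_trans hT₁_one htT₁
  have htpos : 0 < t := lt_of_lt_of_le one_pos ht1
  have hℓt : 0 < ℓ t := hℓ_pos t htpos
  have htε : 1 / t ≤ ε / 2 := by
    have h2ε : 2 / ε ≤ t := le_trans (le_max_right _ _) ht
    have h2ε_pos : 0 < 2 / ε := by positivity
    calc 1 / t ≤ 1 / (2 / ε) := by
          apply one_div_le_one_div_of_le h2ε_pos h2ε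
      _ = ε / 2 := by field_simp
  have hfactor : (1:ℝ) ≤ 1 + (2 / u) ^ τ := by
    have : (0:ℝ) ≤ (2 / u) ^ τ := Real.rpow_nonneg (by positivity) _
    linarith
  have hinv_rpow : ∀ y : ℝ, 0 < y → (y⁻¹ : ℝ) ^ (-σ) = y ^ σ := by
    intro y hy
    rw [Real.inv_rpow (le_of_lt hy), Real.rpow_neg (le_of_lt hy), inv_inv]
  rcases le_or_gt 1 u with hu1 | hu1
  · -- case 1 ≤ u
    have hsub : Ioi (u / t) ⊆ Ioi (1 / t) :=
      Ioi_subset_Ioi (by gcongr)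
    have hmono : (ρ (Ioi (u / t))).toReal ≤ (ρ (Ioi (1 / t))).toReal :=
      ENNReal.toReal_mono (hρ_tail (1 / t) (by positivity)).ne (measure_mono hsub)
    have hbound := hA (1 / t) (by positivity) htε
    have h1t : (1:ℝ) / (1 / t) = t := one_div_one_div t
    have hrpow : ((1:ℝ) / t) ^ (-σ) = t ^ σ := by
      rw [one_div]; exact hinv_rpow t htpos
    rw [h1t, hrpow] at hbound
    calc (ρ (Ioi (u / t))).toReal ≤ 2 * (ℓ t * t ^ σ) := le_trans hmono hbound
      _ = 2 * (t ^ σ * ℓ t) * 1 := by ring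
      _ ≤ 2 * (t ^ σ * ℓ t) * (1 + (2 / u) ^ τ) := by
          apply mul_le_mul_of_nonneg_left hfactor
          positivity
  · -- case u < 1
    have hu_inv : 1 < u⁻¹ := (one_lt_inv₀ hu).mpr hu1
    set n : ℕ := ⌊Real.logb 2 u⁻¹⌋₊ with hn_def
    have hlogb_pos : 0 < Real.logb 2 u⁻¹ := Real.logb_pos (by norm_num) hu_inv
    have hn1 : (n:ℝ) ≤ Real.logb 2 u⁻¹ := Nat.floor_le (le_of_lt hlogb_pos)
    have hn2 : Real.logb 2 u⁻¹ < (n:ℝ) + 1 := Nat.lt_floor_add_one _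
    have hrl : (2:ℝ) ^ Real.logb 2 u⁻¹ = u⁻¹ :=
      Real.rpow_logb (by norm_num) (by norm_num) (by positivity)
    have h2n : (2:ℝ) ^ n ≤ u⁻¹ := by
      calc (2:ℝ) ^ n = (2:ℝ) ^ (n:ℝ) := (Real.rpow_natCast 2 n).symm
        _ ≤ (2:ℝ) ^ Real.logb 2 u⁻¹ := Real.rpow_le_rpow_of_exponent_le (by norm_num) hn1
        _ = u⁻¹ := hrl
    have h2n1 : u⁻¹ < (2:ℝ) ^ (n + 1) := by
      calc u⁻¹ = (2:ℝ) ^ Real.logb 2 u⁻¹ := hrl.symm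
        _ < (2:ℝ) ^ ((n:ℝ) + 1) := Real.rpow_lt_rpow_of_exponent_lt (by norm_num) hn2
        _ = (2:ℝ) ^ (n + 1) := by
            rw [← Real.rpow_natCast 2 (n + 1)]; push_cast; ring_nf
    set v : ℝ := (2:ℝ) ^ (n + 1) with hv_def
    have hv_pos : 0 < v := by positivity
    have hv_one : 1 ≤ v := one_le_pow₀ (by norm_num)
    have hvu : v⁻¹ < u := by
      have := (inv_lt_inv₀ hv_pos (by positivity : (0:ℝ) < u⁻¹)).mpr h2n1
      rwa [inv_inv] at this
    have hsub : Ioi (u / t) ⊆ Ioi (v⁻¹ / t) :=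
      Ioi_subset_Ioi (by gcongr)
    have hx_pos : 0 < v⁻¹ / t := by positivity
    have hmono : (ρ (Ioi (u / t))).toReal ≤ (ρ (Ioi (v⁻¹ / t))).toReal :=
      ENNReal.toReal_mono (hρ_tail _ hx_pos).ne (measure_mono hsub)
    have hxε : v⁻¹ / t ≤ ε / 2 := by
      calc v⁻¹ / t ≤ 1 / t := by
            gcongr
            exact inv_le_one_of_one_le₀ hv_one
        _ ≤ ε / 2 := htε
    have hbound := hA _ hx_pos hxε
    have h1x : (1:ℝ) / (v⁻¹ / t) = v * t := by field_simp
    have hrpowx : (v⁻¹ / t) ^ (-σ) = (v * t) ^ σ := by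
      have : v⁻¹ / t = (v * t)⁻¹ := by field_simp
      rw [this]; exact hinv_rpow _ (by positivity)
    rw [h1x, hrpowx] at hbound
    -- bound ℓ (v * t)
    have hℓvt : ℓ (v * t) ≤ c ^ (n + 1) * ℓ t := hdbl_pow t htT₁ (n + 1)
    have hcv : c ^ (n + 1) = v ^ β := by
      rw [hc_def, hv_def, ← Real.rpow_natCast ((2:ℝ) ^ β) (n + 1),
        ← Real.rpow_mul (by norm_num : (0:ℝ) ≤ 2), ← Real.rpow_natCast (2:ℝ) (n + 1),
        ← Real.rpow_mul (by norm_num : (0:ℝ) ≤ 2), mul_comm]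
    have hvστ : v ^ β * v ^ σ = v ^ τ := by
      rw [← Real.rpow_add hv_pos, hβ_def, hτ_def]; ring_nf
    have hvt_rpow : (v * t) ^ σ = v ^ σ * t ^ σ := Real.mul_rpow (le_of_lt hv_pos) (le_of_lt htpos)
    have hv_le : v ≤ 2 / u := by
      rw [hv_def, pow_succ, mul_comm ((2:ℝ) ^ n) 2, div_eq_mul_inv]
      exact mul_le_mul_of_nonneg_left h2n (by norm_num)
    have hvτ : v ^ τ ≤ (2 / u) ^ τ :=
      Real.rpow_le_rpow (le_of_lt hv_pos) hv_le (le_of_lt hτ_pos)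
    calc (ρ (Ioi (u / t))).toReal ≤ 2 * (ℓ (v * t) * (v * t) ^ σ) := le_trans hmono hbound
      _ ≤ 2 * ((c ^ (n + 1) * ℓ t) * (v * t) ^ σ) := by
          apply mul_le_mul_of_nonneg_left ?_ (by norm_num)
          apply mul_le_mul_of_nonneg_right hℓvt (Real.rpow_nonneg (by positivity) _)
      _ = 2 * (t ^ σ * ℓ t) * (v ^ β * v ^ σ) := by rw [hcv, hvt_rpow]; ring
      _ = 2 * (t ^ σ * ℓ t) * v ^ τ := by rw [hvστ]
      _ ≤ 2 * (t ^ σ * ℓ t) * (2 / u) ^ τ := by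
          apply mul_le_mul_of_nonneg_left hvτ
          have : 0 < t ^ σ := Real.rpow_pos_of_pos htpos σ
          positivity
      _ ≤ 2 * (t ^ σ * ℓ t) * (1 + (2 / u) ^ τ) := by
          apply mul_le_mul_of_nonneg_left ?_ ?_
          · linarith
          · have : 0 < t ^ σ := Real.rpow_pos_of_pos htpos σ
            positivity

lemma pointwise_lim (ρ : Measure ℝ) (ℓ : ℝ → ℝ) (σ : ℝ)
    (hℓ_pos : ∀ x > (0:ℝ), 0 < ℓ x) (hℓ : SlowlyVarying ℓ)
    (hρ_asym : Filter.Tendsto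
      (fun x => (ρ (Set.Ioi x)).toReal / (ℓ (1 / x) * x ^ (-σ)))
      (nhdsWithin 0 (Set.Ioi (0:ℝ))) (nhds 1))
    {u : ℝ} (hu : 0 < u) :
    Tendsto (fun t : ℝ => (ρ (Ioi (u / t))).toReal / (t ^ σ * ℓ t)) atTop
      (nhds (u ^ (-σ))) := by
  have hcomp : Tendsto (fun t : ℝ => u / t) atTop (nhdsWithin 0 (Ioi (0:ℝ))) := by
    rw [tendsto_nhdsWithin_iff]
    constructor
    · exact Tendsto.div_atTop tendsto_const_nhds tendsto_id
    · filter_upwards [eventually_gt_atTop 0] with t ht using mem_Ioi.mpr (div_pos hu ht)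
  have hA : Tendsto (fun t : ℝ =>
      (ρ (Ioi (u / t))).toReal / (ℓ (1 / (u / t)) * (u / t) ^ (-σ))) atTop (nhds 1) :=
    hρ_asym.comp hcomp
  have hB : Tendsto (fun t : ℝ => ℓ (u⁻¹ * t) / ℓ t) atTop (nhds 1) :=
    hℓ u⁻¹ (by positivity)
  have hAB := (hA.mul hB).mul (tendsto_const_nhds (x := u ^ (-σ)))
  rw [one_mul, one_mul] at hAB
  apply hAB.congr'
  filter_upwards [eventually_gt_atTop 0] with t ht
  have hℓt : 0 < ℓ t := hℓ_pos t ht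
  have hℓut : 0 < ℓ (u⁻¹ * t) := hℓ_pos _ (by positivity)
  have h1 : 1 / (u / t) = u⁻¹ * t := by field_simp
  have h2 : (u / t) ^ (-σ) = u ^ (-σ) * t ^ σ := by
    rw [Real.div_rpow (le_of_lt hu) (le_of_lt ht), Real.rpow_neg (le_of_lt ht)]
    field_simp
  have hu_rpow : 0 < u ^ (-σ) := Real.rpow_pos_of_pos hu _
  have ht_rpow : 0 < t ^ σ := Real.rpow_pos_of_pos ht _
  rw [h1, h2]
  have hℓut' : ℓ (t * u⁻¹) ≠ 0 := by rw [mul_comm]; exact hℓut.ne'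
  have hut : u * t⁻¹ = u / t := by ring
  have hℓtu : 0 < ℓ (t / u) := hℓ_pos _ (by positivity)
  field_simp [hℓt.ne', hℓut.ne', hℓut', hu_rpow.ne', ht_rpow.ne']


lemma dct (ρ : Measure ℝ) (ℓ : ℝ → ℝ) (σ : ℝ)
    (hσ0 : 0 ≤ σ) (hσ1 : σ < 1)
    (hℓ_pos : ∀ x > (0:ℝ), 0 < ℓ x) (hℓ : SlowlyVarying ℓ)
    (hρ_tail : ∀ x > (0:ℝ), ρ (Ioi x) < ⊤)
    (hρ_asym : Filter.Tendsto
      (fun x => (ρ (Set.Ioi x)).toReal / (ℓ (1 / x) * x ^ (-σ)))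
      (nhdsWithin 0 (Set.Ioi (0:ℝ))) (nhds 1)) :
    Tendsto (fun t : ℝ => ∫ u in Ioi (0:ℝ),
        Real.exp (-u) * (ρ (Ioi (u / t))).toReal / (t ^ σ * ℓ t)) atTop
      (nhds (Real.Gamma (1 - σ))) := by
  set τ : ℝ := (1 + σ) / 2 with hτ_def
  have hτ_pos : 0 < τ := by rw [hτ_def]; linarith
  have hτ_lt : τ < 1 := by rw [hτ_def]; linarith
  obtain ⟨T, hT1, hPotter⟩ := potter ρ ℓ σ hσ0 hσ1 hℓ_pos hℓ hρ_tail hρ_asym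
  have hΓrepr : Real.Gamma (1 - σ) = ∫ u in Ioi (0:ℝ), Real.exp (-u) * u ^ (-σ) := by
    rw [Real.Gamma_eq_integral (by linarith : (0:ℝ) < 1 - σ)]
    congr 1
    ext u
    norm_num
  rw [hΓrepr]
  apply tendsto_integral_filter_of_dominated_convergence
    (bound := fun u => 2 * (Real.exp (-u) * u ^ (0:ℝ)) +
      (2 * (2:ℝ) ^ τ) * (Real.exp (-u) * u ^ (-τ)))
  · -- measurability
    filter_upwards with t
    have hmeas : Measurable fun u : ℝ => Real.exp (-u) * (ρ (Ioi (u / t))).toReal / (t ^ σ * ℓ t) :=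
      (((Real.continuous_exp.comp continuous_neg).measurable).mul
        ((measurable_rhob ρ).comp (measurable_id.div_const t))).div_const _
    exact hmeas.aestronglyMeasurable
  · -- bound
    filter_upwards [eventually_ge_atTop T] with t htT
    filter_upwards [ae_restrict_mem measurableSet_Ioi] with u hu
    have hu0 : (0:ℝ) < u := hu
    have ht1 : (1:ℝ) ≤ t := le_trans hT1 htT
    have htpos : (0:ℝ) < t := lt_of_lt_of_le one_pos ht1
    have hℓt : 0 < ℓ t := hℓ_pos t htpos
    have hden : 0 < t ^ σ * ℓ t := mul_pos (Real.rpow_pos_of_pos htpos σ) hℓt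
    have hnn : 0 ≤ Real.exp (-u) * (ρ (Ioi (u / t))).toReal / (t ^ σ * ℓ t) := by positivity
    rw [Real.norm_of_nonneg hnn]
    have hP := hPotter t htT u hu0
    calc Real.exp (-u) * (ρ (Ioi (u / t))).toReal / (t ^ σ * ℓ t)
        ≤ Real.exp (-u) * (2 * (t ^ σ * ℓ t) * (1 + (2 / u) ^ τ)) / (t ^ σ * ℓ t) := by
          gcongr
      _ = 2 * (Real.exp (-u) * u ^ (0:ℝ)) +
          (2 * (2:ℝ) ^ τ) * (Real.exp (-u) * u ^ (-τ)) := by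
          rw [Real.rpow_zero, Real.div_rpow (by norm_num) (le_of_lt hu0),
            Real.rpow_neg (le_of_lt hu0)]
          have huτ : (0:ℝ) < u ^ τ := Real.rpow_pos_of_pos hu0 _
          field_simp
  · -- integrability of the bound
    have h1 : IntegrableOn (fun x : ℝ => Real.exp (-x) * x ^ ((1:ℝ) - 1)) (Ioi 0) :=
      Real.GammaIntegral_convergent one_pos
    have e1 : ((1:ℝ) - 1) = 0 := by norm_num
    rw [e1] at h1
    have h2 : IntegrableOn (fun x : ℝ => Real.exp (-x) * x ^ ((1 - τ) - 1)) (Ioi 0) :=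
      Real.GammaIntegral_convergent (by linarith)
    have e2 : ((1:ℝ) - τ - 1) = -τ := by ring
    rw [e2] at h2
    exact (h1.const_mul 2).add (h2.const_mul (2 * (2:ℝ) ^ τ))
  · -- pointwise limit
    filter_upwards [ae_restrict_mem measurableSet_Ioi] with u hu
    have hu0 : (0:ℝ) < u := hu
    have := (pointwise_lim ρ ℓ σ hℓ_pos hℓ hρ_asym hu0).const_mul (Real.exp (-u))
    apply this.congr
    intro t
    rw [mul_div_assoc]

end LaplaceAux

/-- Tauberian result: if `ρ((0,∞)) = ∞`, the tail intensity `ρ̄(x) = ρ((x,∞))` is finite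
for every `x > 0` and `ρ̄(x) ~ ℓ(1/x) x^{-σ}` as `x → 0⁺` with `σ ∈ [0,1)` and `ℓ`
slowly varying, then the Laplace exponent `ψ(t) = ∫ (1 - e^{-ωt}) ρ(dω)` satisfies
`ψ(t) ~ Γ(1-σ) t^σ ℓ(t)` as `t → ∞`. -/
theorem laplace_exponent_asymptotics
    (ρ : Measure ℝ) (ℓ : ℝ → ℝ) (σ : ℝ)
    (hσ0 : 0 ≤ σ) (hσ1 : σ < 1)
    (hℓ_meas : Measurable ℓ) (hℓ_pos : ∀ x > 0, 0 < ℓ x) (hℓ : SlowlyVarying ℓ)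
    (hρ_inf : ρ (Set.Ioi (0:ℝ)) = ⊤)
    (hρ_tail : ∀ x > 0, ρ (Set.Ioi x) < ⊤)
    (hρ_asym : Filter.Tendsto
      (fun x => (ρ (Set.Ioi x)).toReal / (ℓ (1 / x) * x ^ (-σ)))
      (nhdsWithin 0 (Set.Ioi (0:ℝ))) (nhds 1)) :
    Filter.Tendsto
      (fun t => (∫ ω in Set.Ioi (0:ℝ), (1 - Real.exp (-ω * t)) ∂ρ) /
        (Real.Gamma (1 - σ) * t ^ σ * ℓ t))
      Filter.atTop (nhds 1) := by
  have hΓpos : 0 < Real.Gamma (1 - σ) := Real.Gamma_pos_of_pos (by linarith)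
  have hDCT := LaplaceAux.dct ρ ℓ σ hσ0 hσ1 hℓ_pos hℓ hρ_tail hρ_asym
  simp_rw [div_eq_mul_inv, integral_mul_const, ← div_eq_mul_inv] at hDCT
  have hfinal := hDCT.div_const (Real.Gamma (1 - σ))
  rw [div_self hΓpos.ne'] at hfinal
  apply hfinal.congr'
  filter_upwards [eventually_gt_atTop 0] with t ht
  rw [LaplaceAux.repr_key ρ hρ_tail ht, div_div, mul_comm (t ^ σ * ℓ t), ← mul_assoc]
end
end

section
/- Let ρ be a Borel measure on (0,∞) with ρ((0,∞)) = ∞, with tail intensity ρ̄(x) = ρ((x,∞)) finite for every x > 0, and suppose ρ̄(x) ~ ℓ(1/x) as x → 0⁺, where ℓ is slowly varying at infinity (i.e., the index of variation is σ = 0). Then for every integer r ≥ 1, κ(r,t) = ∫₀^∞ ω^r e^{−tω} ρ(dω) satisfies κ(r,t)/(t^{−r} ℓ(t)) → 0 as t → ∞. -/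
open MeasureTheory Filter Set

noncomputable section

namespace KappaAux

/-- Integrability of `s^p * exp(-(c*s))` on `(0,∞)` for `p > -1`, `c > 0`. -/
lemma integrableOn_rpow_mul_exp {p : ℝ} (hp : -1 < p) {c : ℝ} (hc : 0 < c) :
    IntegrableOn (fun s : ℝ => s ^ p * Real.exp (-(c * s))) (Set.Ioi 0) := by
  have h0 : IntegrableOn (fun x : ℝ => Real.exp (-x) * x ^ (p + 1 - 1)) (Set.Ioi 0) :=
    Real.GammaIntegral_convergent (by linarith)
  have h1 : IntegrableOn (fun x : ℝ => Real.exp (-(c * x)) * (c * x) ^ (p + 1 - 1))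
      (Set.Ioi 0) := by
    have := (integrableOn_Ioi_comp_mul_left_iff
      (fun x : ℝ => Real.exp (-x) * x ^ (p + 1 - 1)) 0 hc).mpr (by simpa using h0)
    simpa using this
  have h2 : IntegrableOn (fun x : ℝ => c ^ (p + 1 - 1) * (Real.exp (-(c * x)) * x ^ p))
      (Set.Ioi 0) := by
    refine h1.congr_fun ?_ measurableSet_Ioi
    intro x hx
    simp only
    rw [Real.mul_rpow hc.le (le_of_lt hx), show p + 1 - 1 = p by ring]
    ring
  have h3 := h2.const_mul ((c : ℝ) ^ (p + 1 - 1) : ℝ)⁻¹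
  refine (IntegrableOn.congr_fun h3 ?_ measurableSet_Ioi)
  intro x hx
  simp only
  rw [inv_mul_cancel_left₀ (by positivity)]
  ring

end KappaAux

namespace KappaAux2
open KappaAux

lemma integral_cancel (r : ℕ) (hr : 1 ≤ r) :
    ∫ u in Set.Ioi (0:ℝ), u ^ (r - 1) * ((r : ℝ) - u) * Real.exp (-u) = 0 := by
  have hg1 : IntegrableOn (fun u : ℝ => Real.exp (-u) * u ^ ((r : ℝ) - 1)) (Set.Ioi 0) :=
    Real.GammaIntegral_convergent (by positivity)
  have hg2 : IntegrableOn (fun u : ℝ => Real.exp (-u) * u ^ ((r : ℝ) + 1 - 1)) (Set.Ioi 0) :=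
    Real.GammaIntegral_convergent (by positivity)
  have key : ∫ u in Set.Ioi (0:ℝ), u ^ (r - 1) * ((r : ℝ) - u) * Real.exp (-u)
      = (r : ℝ) * (∫ u in Set.Ioi (0:ℝ), Real.exp (-u) * u ^ ((r : ℝ) - 1)) -
        ∫ u in Set.Ioi (0:ℝ), Real.exp (-u) * u ^ ((r : ℝ) + 1 - 1) := by
    rw [← integral_const_mul, ← integral_sub ((hg1.const_mul _)) hg2]
    refine setIntegral_congr_fun measurableSet_Ioi ?_
    intro u hu
    have hu0 : (0:ℝ) < u := hu
    have h1 : u ^ ((r:ℝ) - 1) = u ^ (r - 1 : ℕ) := by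
      rw [← Real.rpow_natCast u (r - 1), Nat.cast_sub hr, Nat.cast_one]
    have h2 : u ^ ((r:ℝ) + 1 - 1) = u ^ (r - 1 : ℕ) * u := by
      rw [show (r:ℝ) + 1 - 1 = ((r - 1 : ℕ) : ℝ) + 1 by
        rw [Nat.cast_sub hr]; push_cast; ring,
        Real.rpow_add hu0, Real.rpow_natCast, Real.rpow_one]
    simp only [h1, h2]
    ring
  have g1 : ∫ u in Set.Ioi (0:ℝ), Real.exp (-u) * u ^ ((r:ℝ) - 1) = Real.Gamma r :=
    (Real.Gamma_eq_integral (by positivity)).symm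
  have g2 : ∫ u in Set.Ioi (0:ℝ), Real.exp (-u) * u ^ ((r:ℝ) + 1 - 1) = Real.Gamma ((r:ℝ) + 1) :=
    (Real.Gamma_eq_integral (by positivity)).symm
  rw [key, g1, g2, Real.Gamma_add_one (by positivity : ((r:ℝ)) ≠ 0)]
  ring

end KappaAux2

namespace KappaAux3

lemma sigmaFinite_restrict (ρ : Measure ℝ) (hρ_tail : ∀ x > 0, ρ (Set.Ioi x) < ⊤) :
    SigmaFinite (ρ.restrict (Set.Ioi 0)) := by
  refine ⟨⟨⟨fun n => Iic 0 ∪ Ioi (1 / (n + 1) : ℝ), fun _ => trivial, fun n => ?_, ?_⟩⟩⟩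
  · rw [Measure.restrict_apply (measurableSet_Iic.union measurableSet_Ioi)]
    have hsub : (Iic 0 ∪ Ioi (1 / (n + 1) : ℝ)) ∩ Ioi 0 ⊆ Ioi (1 / (n + 1) : ℝ) := by
      rintro x ⟨hx1 | hx1, hx2⟩
      · exact absurd (show (0:ℝ) < x from hx2) (not_lt.mpr hx1)
      · exact hx1
    exact lt_of_le_of_lt (measure_mono hsub) (hρ_tail _ (by positivity))
  · ext x
    simp only [mem_iUnion, mem_union, mem_Iic, mem_Ioi, mem_univ, iff_true]
    rcases le_or_gt x 0 with h | h
    · exact ⟨0, Or.inl h⟩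
    · obtain ⟨n, hn⟩ := exists_nat_one_div_lt h
      exact ⟨n, Or.inr hn⟩

lemma potter (ℓ : ℝ → ℝ) (hℓ_pos : ∀ x > 0, 0 < ℓ x) (hℓ : SlowlyVarying ℓ)
    (ρ : Measure ℝ) (hρ_tail : ∀ x > 0, ρ (Set.Ioi x) < ⊤)
    (hρ_asym : Filter.Tendsto (fun x => (ρ (Set.Ioi x)).toReal / ℓ (1 / x))
      (nhdsWithin 0 (Set.Ioi (0:ℝ))) (nhds 1)) :
    ∃ T : ℝ, 1 ≤ T ∧ ∀ t, T ≤ t → ∀ u, 0 < u →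
      (ρ (Set.Ioi (u / t))).toReal ≤ 3 * (Real.sqrt u⁻¹ + 1) * ℓ t := by
  -- √2 bound for doubling
  have hsqrt2 : (1:ℝ) < Real.sqrt 2 := by
    nlinarith [Real.sq_sqrt (by norm_num : (0:ℝ) ≤ 2), Real.sqrt_nonneg 2]
  have h2 : ∀ᶠ t in atTop, ℓ (2 * t) / ℓ t ≤ Real.sqrt 2 :=
    (hℓ 2 two_pos).eventually (eventually_le_nhds hsqrt2)
  obtain ⟨T₂, hT₂⟩ := eventually_atTop.mp h2
  -- tail vs ℓ near 0
  have h3 : ∀ᶠ x in nhdsWithin 0 (Set.Ioi (0:ℝ)),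
      (ρ (Set.Ioi x)).toReal / ℓ (1 / x) ≤ 2 :=
    hρ_asym.eventually (eventually_le_nhds one_lt_two)
  rw [eventually_nhdsWithin_iff] at h3
  obtain ⟨x₀, hx₀pos, hx₀⟩ := Metric.eventually_nhds_iff.mp h3
  have htail : ∀ x : ℝ, 0 < x → x < x₀ → (ρ (Set.Ioi x)).toReal ≤ 2 * ℓ (1 / x) := by
    intro x hx hxx
    have := hx₀ (show dist x 0 < x₀ by
      rw [Real.dist_eq, sub_zero, abs_of_pos hx]; exact hxx) hx
    exact (div_le_iff₀ (hℓ_pos _ (by positivity))).mp this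
  set T : ℝ := max (max T₂ 1) (2 / x₀) with hT
  refine ⟨T, le_trans (le_max_right T₂ 1) (le_trans (le_max_left _ _) le_rfl), ?_⟩
  intro t ht u hu
  have htpos : (0:ℝ) < t := lt_of_lt_of_le one_pos (le_trans (le_trans (le_max_right T₂ 1) (le_max_left _ _)) ht)
  have ht1 : (1:ℝ) ≤ t := le_trans (le_trans (le_max_right T₂ 1) (le_max_left _ _)) ht
  have htT₂ : T₂ ≤ t := le_trans (le_trans (le_max_left T₂ 1) (le_max_left _ _)) ht
  have htx₀ : 2 / x₀ ≤ t := le_trans (le_max_right _ _) ht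
  have hinv : 1 / t ≤ x₀ / 2 := by
    rw [div_le_div_iff₀ htpos (by norm_num), one_mul]
    calc (2:ℝ) = (2/x₀) * x₀ := by field_simp
    _ ≤ t * x₀ := mul_le_mul_of_nonneg_right htx₀ hx₀pos.le
    _ = x₀ * t := mul_comm _ _
  -- doubling iteration
  have hdouble : ∀ j : ℕ, ℓ (2 ^ j * t) ≤ Real.sqrt (2 ^ j) * ℓ t := by
    intro j
    induction j with
    | zero => simp
    | succ j ih =>
      have hjt : T₂ ≤ 2 ^ j * t :=
        le_trans htT₂ (le_mul_of_one_le_left htpos.le (one_le_pow₀ one_le_two))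
      have hstep : ℓ (2 * (2 ^ j * t)) ≤ Real.sqrt 2 * ℓ (2 ^ j * t) := by
        have := hT₂ _ hjt
        rw [div_le_iff₀ (hℓ_pos _ (by positivity))] at this
        linarith
      calc ℓ (2 ^ (j + 1) * t) = ℓ (2 * (2 ^ j * t)) := by ring_nf
      _ ≤ Real.sqrt 2 * ℓ (2 ^ j * t) := hstep
      _ ≤ Real.sqrt 2 * (Real.sqrt (2 ^ j) * ℓ t) := by
          exact mul_le_mul_of_nonneg_left ih (Real.sqrt_nonneg 2)
      _ = Real.sqrt (2 ^ (j + 1)) * ℓ t := by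
          rw [← mul_assoc, ← Real.sqrt_mul (by norm_num : (0:ℝ) ≤ 2), ← pow_succ']
  have hℓt : 0 < ℓ t := hℓ_pos t htpos
  rcases le_or_gt u 1 with hu1 | hu1
  · -- small u : dyadic decomposition
    have hu1' : (1:ℝ) ≤ u⁻¹ := (one_le_inv_iff₀).mpr ⟨hu, hu1⟩
    set k : ℕ := ⌊Real.logb 2 u⁻¹⌋₊ with hk
    have hlogb : (0:ℝ) ≤ Real.logb 2 u⁻¹ := Real.logb_nonneg one_lt_two hu1'
    have hk1 : (2:ℝ) ^ k ≤ u⁻¹ := by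
      rw [← Real.rpow_natCast]
      calc (2:ℝ) ^ (k:ℝ) ≤ 2 ^ Real.logb 2 u⁻¹ :=
        Real.rpow_le_rpow_of_exponent_le one_le_two (Nat.floor_le hlogb)
      _ = u⁻¹ := Real.rpow_logb two_pos (by norm_num) (by positivity)
    have hk2 : u⁻¹ < (2:ℝ) ^ (k + 1) := by
      rw [← Real.rpow_natCast]
      calc u⁻¹ = 2 ^ Real.logb 2 u⁻¹ := (Real.rpow_logb two_pos (by norm_num) (by positivity)).symm
      _ < 2 ^ ((k:ℝ) + 1) := by
          apply Real.rpow_lt_rpow_of_exponent_lt one_lt_two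
          push_cast
          rw [hk]
          exact Nat.lt_floor_add_one _
      _ = 2 ^ ((k + 1 : ℕ) : ℝ) := by push_cast; ring_nf
    set x : ℝ := ((2:ℝ) ^ (k + 1) * t)⁻¹ with hxdef
    have hxpos : 0 < x := by positivity
    have hxlt : x < u / t := by
      rw [hxdef, mul_inv]
      rw [div_eq_mul_inv u t]
      apply mul_lt_mul_of_pos_right _ (by positivity)
      exact inv_lt_of_inv_lt₀ hu hk2
    have hxx₀ : x < x₀ := by
      have h2k : (2:ℝ) ≤ 2 ^ (k + 1) := by
        calc (2:ℝ) = 2 ^ 1 := (pow_one 2).symm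
        _ ≤ 2 ^ (k + 1) := pow_le_pow_right₀ one_le_two (by omega)
      have : x ≤ (2 * t)⁻¹ := by
        rw [hxdef]
        exact inv_anti₀ (by positivity) (mul_le_mul_of_nonneg_right h2k htpos.le)
      calc x ≤ (2 * t)⁻¹ := this
      _ = (1 / t) / 2 := by rw [div_div, one_div, mul_comm 2 t]
      _ ≤ (x₀ / 2) / 2 := by linarith
      _ < x₀ := by linarith
    have hmono : (ρ (Set.Ioi (u / t))).toReal ≤ (ρ (Set.Ioi x)).toReal :=
      ENNReal.toReal_mono (hρ_tail x hxpos).ne (measure_mono (Ioi_subset_Ioi hxlt.le))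
    have hbd : (ρ (Set.Ioi x)).toReal ≤ 2 * ℓ (2 ^ (k + 1) * t) := by
      have := htail x hxpos hxx₀
      rwa [hxdef, one_div, inv_inv] at this
    have hfinal : ℓ (2 ^ (k + 1) * t) ≤ Real.sqrt 2 * Real.sqrt u⁻¹ * ℓ t := by
      calc ℓ (2 ^ (k + 1) * t) ≤ Real.sqrt (2 ^ (k + 1)) * ℓ t := hdouble (k + 1)
      _ = Real.sqrt 2 * Real.sqrt (2 ^ k) * ℓ t := by
          rw [pow_succ', Real.sqrt_mul (by norm_num : (0:ℝ) ≤ 2)]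
      _ ≤ Real.sqrt 2 * Real.sqrt u⁻¹ * ℓ t := by
          apply mul_le_mul_of_nonneg_right _ hℓt.le
          exact mul_le_mul_of_nonneg_left (Real.sqrt_le_sqrt hk1) (Real.sqrt_nonneg 2)
    have hsq2 : Real.sqrt 2 ≤ 3 / 2 := by
      nlinarith [Real.sq_sqrt (by norm_num : (0:ℝ) ≤ 2), Real.sqrt_nonneg 2]
    have hsqu : (0:ℝ) ≤ Real.sqrt u⁻¹ := Real.sqrt_nonneg _
    calc (ρ (Set.Ioi (u / t))).toReal ≤ 2 * (Real.sqrt 2 * Real.sqrt u⁻¹ * ℓ t) := by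
          calc (ρ (Set.Ioi (u / t))).toReal ≤ (ρ (Set.Ioi x)).toReal := hmono
          _ ≤ 2 * ℓ (2 ^ (k + 1) * t) := hbd
          _ ≤ 2 * (Real.sqrt 2 * Real.sqrt u⁻¹ * ℓ t) := by linarith
    _ ≤ 3 * (Real.sqrt u⁻¹ + 1) * ℓ t := by
        nlinarith [mul_nonneg hsqu hℓt.le,
          mul_le_mul_of_nonneg_right (mul_le_mul_of_nonneg_right hsq2 hsqu) hℓt.le]
  · -- large u
    have h1t : (1:ℝ) / t ≤ u / t := by gcongr
    have hmono : (ρ (Set.Ioi (u / t))).toReal ≤ (ρ (Set.Ioi (1 / t))).toReal :=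
      ENNReal.toReal_mono (hρ_tail _ (by positivity)).ne
        (measure_mono (Ioi_subset_Ioi h1t))
    have hx : (1:ℝ) / t < x₀ := by linarith
    have hbd := htail (1 / t) (by positivity) hx
    rw [one_div_one_div] at hbd
    have hsqu : (0:ℝ) ≤ Real.sqrt u⁻¹ := Real.sqrt_nonneg _
    calc (ρ (Set.Ioi (u / t))).toReal ≤ 2 * ℓ t := le_trans hmono hbd
    _ ≤ 3 * (Real.sqrt u⁻¹ + 1) * ℓ t := by nlinarith

end KappaAux3

open KappaAux in
lemma maj_integrable (r : ℕ) (hr : 1 ≤ r) {t C : ℝ} (ht : 0 < t) (hC : 0 ≤ C) :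
    IntegrableOn (fun s : ℝ =>
      |s ^ (r - 1) * ((r : ℝ) - t * s) * Real.exp (-(t * s))| *
        (C * (Real.sqrt (t * s)⁻¹ + 1))) (Set.Ioi 0) := by
  set A : ℝ := t ^ (-(1/2) : ℝ) with hA
  set K : ℝ := C * ((r : ℝ) + t) * (A + 1) with hK
  have hApos : 0 < A := by rw [hA]; positivity
  have hKnn : 0 ≤ K := by rw [hK]; positivity
  have hint : IntegrableOn (fun s : ℝ =>
      K * (s ^ ((r:ℝ) - 3/2) * Real.exp (-(t * s)) + s ^ (r:ℝ) * Real.exp (-(t * s))))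
      (Set.Ioi 0) := by
    refine Integrable.const_mul ?_ K
    refine Integrable.add ?_ ?_
    · refine integrableOn_rpow_mul_exp ?_ ht
      have : (1:ℝ) ≤ (r:ℝ) := by exact_mod_cast hr
      linarith
    · refine integrableOn_rpow_mul_exp ?_ ht
      have : (1:ℝ) ≤ (r:ℝ) := by exact_mod_cast hr
      linarith
  refine Integrable.mono hint ?_ ?_
  · apply Measurable.aestronglyMeasurable
    apply Measurable.mul
    · apply Measurable.abs
      apply Measurable.mul
      · exact (measurable_id.pow_const _).mul
          (measurable_const.sub (measurable_const.mul measurable_id))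
      · exact (Real.measurable_exp.comp (measurable_const.mul measurable_id).neg)
    · exact measurable_const.mul
        ((Real.continuous_sqrt.measurable.comp
          ((measurable_const.mul measurable_id).inv)).add measurable_const)
  · filter_upwards [ae_restrict_mem measurableSet_Ioi] with s hs
    have hs0 : (0:ℝ) < s := hs
    set e : ℝ := Real.exp (-(t * s)) with he
    have hepos : 0 < e := Real.exp_pos _
    set P : ℝ := s ^ ((r:ℝ) - 1) with hP
    set B : ℝ := s ^ (-(1/2) : ℝ) with hB
    set a : ℝ := s ^ ((r:ℝ) - 3/2) with ha
    set b : ℝ := s ^ (r:ℝ) with hb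
    set c : ℝ := s ^ ((r:ℝ) - 1/2) with hc
    have hPpos : 0 < P := by rw [hP]; positivity
    have hBpos : 0 < B := by rw [hB]; positivity
    have hapos : 0 < a := by rw [ha]; positivity
    have hbpos : 0 < b := by rw [hb]; positivity
    have hcpos : 0 < c := by rw [hc]; positivity
    have hp1 : s ^ (r - 1 : ℕ) = P := by
      rw [hP, ← Real.rpow_natCast s (r - 1), Nat.cast_sub hr, Nat.cast_one]
    have hPB : P * B = a := by
      rw [hP, hB, ha, ← Real.rpow_add hs0]; congr 1 <;> ring
    have hsP : s * P = b := by
      rw [hP, hb]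
      nth_rewrite 1 [← Real.rpow_one s]
      rw [← Real.rpow_add hs0]; congr 1 <;> ring
    have hcB : b * B = c := by
      rw [hb, hB, hc, ← Real.rpow_add hs0]; congr 1 <;> ring
    have hAB : Real.sqrt (t * s)⁻¹ = A * B := by
      rw [hA, hB, Real.sqrt_eq_rpow, Real.inv_rpow (by positivity : (0:ℝ) ≤ t * s),
        ← Real.rpow_neg (by positivity : (0:ℝ) ≤ t * s),
        Real.mul_rpow ht.le hs0.le]
    have hend : ∀ p : ℝ, (r:ℝ) - 3/2 ≤ p → p ≤ (r:ℝ) → s ^ p ≤ a + b := by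
      intro p h1 h2
      rcases le_or_gt s 1 with hs1 | hs1
      · have := Real.rpow_le_rpow_of_exponent_ge hs0 hs1 h1
        rw [← ha] at this; linarith
      · have := Real.rpow_le_rpow_of_exponent_le hs1.le h2
        rw [← hb] at this; linarith
    have hPle : P ≤ a + b := by
      rw [hP]
      refine hend _ (by linarith) (by linarith)
    have hale : a ≤ a + b := by linarith
    have hcle : c ≤ a + b := by
      rw [hc]; refine hend _ (by linarith) (by linarith)
    have hble : b ≤ a + b := by linarith
    have habs : |s ^ (r - 1) * ((r:ℝ) - t * s) * e| ≤ P * ((r:ℝ) + t * s) * e := by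
      rw [abs_mul, abs_mul, abs_of_nonneg (pow_nonneg hs0.le _),
        abs_of_nonneg hepos.le, hp1]
      have hrts : |(r:ℝ) - t * s| ≤ (r:ℝ) + t * s := by
        have h1 : (0:ℝ) ≤ t * s := by positivity
        have h2 : (0:ℝ) ≤ (r:ℝ) := by positivity
        rw [abs_le]; constructor <;> nlinarith
      exact mul_le_mul_of_nonneg_right
        (mul_le_mul_of_nonneg_left hrts hPpos.le) hepos.le
    have hfnn : (0:ℝ) ≤ |s ^ (r - 1) * ((r:ℝ) - t * s) * e| * (C * (Real.sqrt (t * s)⁻¹ + 1)) := by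
      have : (0:ℝ) ≤ Real.sqrt (t * s)⁻¹ := Real.sqrt_nonneg _
      positivity
    rw [Real.norm_eq_abs, Real.norm_eq_abs, abs_of_nonneg hfnn,
      abs_of_nonneg (by positivity : (0:ℝ) ≤ K * (a * e + b * e))]
    calc |s ^ (r - 1) * ((r:ℝ) - t * s) * e| * (C * (Real.sqrt (t * s)⁻¹ + 1))
        ≤ (P * ((r:ℝ) + t * s) * e) * (C * (A * B + 1)) := by
          rw [hAB]
          refine mul_le_mul_of_nonneg_right habs (by positivity)
      _ = C * e * ((r:ℝ) * A * (P * B) + t * A * ((s * P) * B) + (r:ℝ) * P + t * (s * P)) := by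
          ring
      _ = C * e * ((r:ℝ) * A * a + t * A * c + (r:ℝ) * P + t * b) := by
          rw [hPB, hsP, hcB]
      _ ≤ C * e * ((r:ℝ) * A * (a + b) + t * A * (a + b) + (r:ℝ) * (a + b) + t * (a + b)) := by
          have hrnn : (0:ℝ) ≤ (r:ℝ) := by positivity
          refine mul_le_mul_of_nonneg_left ?_ (by positivity)
          gcongr
      _ = K * (a * e + b * e) := by rw [hK]; ring

lemma key_identity (ρ : Measure ℝ) (hρ_tail : ∀ x > 0, ρ (Set.Ioi x) < ⊤)
    (r : ℕ) (hr : 1 ≤ r) {t C : ℝ} (ht : 0 < t) (hC : 0 ≤ C)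
    (hbound : ∀ s : ℝ, 0 < s → (ρ (Set.Ioi s)).toReal ≤ C * (Real.sqrt (t * s)⁻¹ + 1)) :
    ∫ ω in Set.Ioi (0:ℝ), ω ^ r * Real.exp (-(t * ω)) ∂ρ
      = ∫ s in Set.Ioi (0:ℝ),
          (ρ (Set.Ioi s)).toReal * (s ^ (r - 1) * ((r:ℝ) - t * s) * Real.exp (-(t * s))) := by
  haveI : SigmaFinite (ρ.restrict (Set.Ioi 0)) := KappaAux3.sigmaFinite_restrict ρ hρ_tail
  set h : ℝ → ℝ := fun s => s ^ (r - 1) * ((r:ℝ) - t * s) * Real.exp (-(t * s)) with hh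
  have hh_cont : Continuous h := by fun_prop
  set F : ℝ × ℝ → ℝ := fun p => if 0 < p.2 ∧ p.2 < p.1 then h p.2 else 0 with hF
  have hFmeas : Measurable F := by
    have hset : MeasurableSet {p : ℝ × ℝ | 0 < p.2 ∧ p.2 < p.1} :=
      (measurableSet_lt measurable_const measurable_snd).inter
        (measurableSet_lt measurable_snd measurable_fst)
    exact Measurable.ite hset (hh_cont.measurable.comp measurable_snd) measurable_const
  have hFTC : ∀ ω : ℝ, 0 < ω →
      ∫ s in Set.Ioo 0 ω, h s = ω ^ r * Real.exp (-(t * ω)) := by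
    intro ω hω
    have hderiv : ∀ x ∈ Set.uIcc (0:ℝ) ω,
        HasDerivAt (fun s : ℝ => s ^ r * Real.exp (-(t * s))) (h x) x := by
      intro x _
      have h1 : HasDerivAt (fun s : ℝ => s ^ r) ((r:ℝ) * x ^ (r - 1)) x := hasDerivAt_pow r x
      have h2 : HasDerivAt (fun s : ℝ => Real.exp (-(t * s))) (Real.exp (-(t * x)) * (-t)) x := by
        have hlin : HasDerivAt (fun s : ℝ => -(t * s)) (-t) x := by
          have hneg := ((hasDerivAt_id x).const_mul t).neg; rw [mul_one] at hneg; exact hneg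
        simpa [mul_comm] using hlin.exp
      have h3 := h1.mul h2
      refine h3.congr_deriv ?_
      have hxr : x ^ r = x ^ (r - 1) * x := by
        conv_lhs => rw [show r = (r - 1) + 1 by omega]
        rw [pow_succ]
      rw [hh]; simp only; rw [hxr]; ring
    have hint : IntervalIntegrable h volume 0 ω := hh_cont.intervalIntegrable _ _
    have heq := intervalIntegral.integral_eq_sub_of_hasDerivAt hderiv hint
    rw [intervalIntegral.integral_of_le hω.le] at heq
    rw [← MeasureTheory.integral_Ioc_eq_integral_Ioo, heq]
    simp [zero_pow (by omega : r ≠ 0)]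
  -- product integrability
  have hmaj := maj_integrable r hr ht hC
  have hInt : Integrable F ((ρ.restrict (Set.Ioi 0)).prod (volume.restrict (Set.Ioi 0))) := by
    refine ⟨hFmeas.aestronglyMeasurable, ?_⟩
    rw [hasFiniteIntegral_iff_norm]
    rw [lintegral_prod_symm _ (hFmeas.norm.ennreal_ofReal).aemeasurable]
    have inner_eq : ∀ s : ℝ, 0 < s →
        (∫⁻ ω, ENNReal.ofReal ‖F (ω, s)‖ ∂(ρ.restrict (Set.Ioi 0)))
          = ENNReal.ofReal |h s| * ρ (Set.Ioi s) := by
      intro s hs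
      have hfun : (fun ω => ENNReal.ofReal ‖F (ω, s)‖)
          = (Set.Ioi s).indicator (fun _ => ENNReal.ofReal |h s|) := by
        funext ω
        by_cases hc : s < ω
        · simp [hF, hs, hc, Set.indicator_of_mem, Real.norm_eq_abs]
        · simp [hF, hs, hc, Set.indicator_of_notMem, Real.norm_eq_abs]
      rw [hfun, lintegral_indicator measurableSet_Ioi, setLIntegral_const,
        Measure.restrict_apply measurableSet_Ioi,
        Set.inter_eq_self_of_subset_left (Set.Ioi_subset_Ioi hs.le)]
    calc ∫⁻ s in Set.Ioi (0:ℝ), (∫⁻ ω, ENNReal.ofReal ‖F (ω, s)‖ ∂(ρ.restrict (Set.Ioi 0)))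
        = ∫⁻ s in Set.Ioi (0:ℝ), ENNReal.ofReal |h s| * ρ (Set.Ioi s) := by
          refine lintegral_congr_ae ?_
          filter_upwards [ae_restrict_mem measurableSet_Ioi] with s hs
          exact inner_eq s hs
      _ ≤ ∫⁻ s in Set.Ioi (0:ℝ),
            ENNReal.ofReal (|h s| * (C * (Real.sqrt (t * s)⁻¹ + 1))) := by
          refine lintegral_mono_ae ?_
          filter_upwards [ae_restrict_mem measurableSet_Ioi] with s hs
          rw [ENNReal.ofReal_mul (abs_nonneg _)]
          refine mul_le_mul_right ?_ _
          rw [← ENNReal.ofReal_toReal (hρ_tail s hs).ne]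
          exact ENNReal.ofReal_le_ofReal (hbound s hs)
      _ < ⊤ := hmaj.lintegral_lt_top
  -- swap
  have hswap := MeasureTheory.integral_integral_swap
    (f := fun ω s => F (ω, s)) hInt
  have hL : ∫ ω in Set.Ioi (0:ℝ), ω ^ r * Real.exp (-(t * ω)) ∂ρ
      = ∫ ω, (∫ s, F (ω, s) ∂(volume.restrict (Set.Ioi 0))) ∂(ρ.restrict (Set.Ioi 0)) := by
    refine integral_congr_ae ?_
    filter_upwards [ae_restrict_mem measurableSet_Ioi] with ω hω
    have hfun : (fun s => F (ω, s)) = (Set.Ioo 0 ω).indicator h := by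
      funext s
      simp [hF, Set.indicator_apply, Set.mem_Ioo]
    rw [hfun, integral_indicator measurableSet_Ioo,
      Measure.restrict_restrict measurableSet_Ioo,
      Set.inter_eq_self_of_subset_left Set.Ioo_subset_Ioi_self,
      hFTC ω hω]
  have hR : ∫ s, (∫ ω, F (ω, s) ∂(ρ.restrict (Set.Ioi 0))) ∂(volume.restrict (Set.Ioi 0))
      = ∫ s in Set.Ioi (0:ℝ), (ρ (Set.Ioi s)).toReal * h s := by
    refine integral_congr_ae ?_
    filter_upwards [ae_restrict_mem measurableSet_Ioi] with s hs
    have hs0 : (0:ℝ) < s := hs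
    have hfun : (fun ω => F (ω, s)) = (Set.Ioi s).indicator (fun _ => h s) := by
      funext ω
      by_cases hc : s < ω
      · simp [hF, hs0, hc, Set.indicator_of_mem]
      · simp [hF, hs0, hc, Set.indicator_of_notMem]
    rw [hfun, integral_indicator measurableSet_Ioi, setIntegral_const,
      measureReal_restrict_apply measurableSet_Ioi,
      Set.inter_eq_self_of_subset_left (Set.Ioi_subset_Ioi hs.le), smul_eq_mul]
    rfl
  rw [hL, hswap, hR]

lemma substitution (f : ℝ → ℝ) (r : ℕ) (hr : 1 ≤ r) {t : ℝ} (ht : 0 < t) :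
    ∫ s in Set.Ioi (0:ℝ), f s * (s ^ (r - 1) * ((r:ℝ) - t * s) * Real.exp (-(t * s)))
      = (t ^ r : ℝ)⁻¹ *
        ∫ u in Set.Ioi (0:ℝ), f (u / t) * (u ^ (r - 1) * ((r:ℝ) - u) * Real.exp (-u)) := by
  set G : ℝ → ℝ := fun u => f (u / t) * (u ^ (r - 1) * ((r:ℝ) - u) * Real.exp (-u)) with hG
  have hchg := MeasureTheory.integral_comp_mul_left_Ioi G 0 ht
  rw [mul_zero, smul_eq_mul] at hchg
  have h1 : ∫ x in Set.Ioi (0:ℝ), G (t * x)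
      = t ^ (r - 1) *
        ∫ s in Set.Ioi (0:ℝ), f s * (s ^ (r - 1) * ((r:ℝ) - t * s) * Real.exp (-(t * s))) := by
    rw [← integral_const_mul]
    refine setIntegral_congr_fun measurableSet_Ioi ?_
    intro x hx
    rw [hG]; simp only
    rw [mul_div_cancel_left₀ _ ht.ne', mul_pow]
    ring
  have ht1 : (t:ℝ) ^ (r - 1) ≠ 0 := by positivity
  have h2 : t ^ (r - 1) *
      (∫ s in Set.Ioi (0:ℝ), f s * (s ^ (r - 1) * ((r:ℝ) - t * s) * Real.exp (-(t * s))))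
      = t⁻¹ * ∫ u in Set.Ioi (0:ℝ), G u := h1 ▸ hchg
  have h3 : (∫ s in Set.Ioi (0:ℝ), f s * (s ^ (r - 1) * ((r:ℝ) - t * s) * Real.exp (-(t * s))))
      = (t ^ (r - 1) : ℝ)⁻¹ * (t⁻¹ * ∫ u in Set.Ioi (0:ℝ), G u) := by
    rw [← h2, inv_mul_cancel_left₀ ht1]
  have hpow : (t:ℝ) ^ r = t * t ^ (r - 1) := by
    conv_lhs => rw [show r = (r - 1) + 1 by omega]
    rw [pow_succ']
  rw [h3, hpow, mul_inv]
  ring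

lemma pointwise_limit (ρ : Measure ℝ) (ℓ : ℝ → ℝ)
    (hℓ_pos : ∀ x > 0, 0 < ℓ x) (hℓ : SlowlyVarying ℓ)
    (hρ_asym : Filter.Tendsto (fun x => (ρ (Set.Ioi x)).toReal / ℓ (1 / x))
      (nhdsWithin 0 (Set.Ioi (0:ℝ))) (nhds 1))
    (u : ℝ) (hu : 0 < u) :
    Filter.Tendsto (fun t => (ρ (Set.Ioi (u / t))).toReal / ℓ t) atTop (nhds 1) := by
  have h1 : Filter.Tendsto (fun t : ℝ => u / t) atTop (nhdsWithin 0 (Set.Ioi 0)) := by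
    apply tendsto_nhdsWithin_of_tendsto_nhds_of_eventually_within
    · simpa using Filter.Tendsto.div_atTop (tendsto_const_nhds (x := u)) tendsto_id
    · filter_upwards [eventually_gt_atTop 0] with t ht
      exact div_pos hu ht
  have hA := hρ_asym.comp h1
  have hB := hℓ u⁻¹ (inv_pos.mpr hu)
  have hAB := hA.mul hB
  rw [mul_one] at hAB
  refine Filter.Tendsto.congr' ?_ hAB
  filter_upwards [eventually_gt_atTop 0] with t htpos
  have hx : (1:ℝ) / (u / t) = u⁻¹ * t := by field_simp
  have hℓne : ℓ (u⁻¹ * t) ≠ 0 := (hℓ_pos _ (by positivity)).ne'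
  simp only [Function.comp]
  rw [hx, div_mul_div_comm, mul_comm ((ρ (Set.Ioi (u / t))).toReal) (ℓ (u⁻¹ * t))]
  exact mul_div_mul_left _ _ hℓne

/-- Tauberian result, case `σ = 0`: if `ρ((0,∞)) = ∞`, the tail intensity
`ρ̄(x) = ρ((x,∞))` is finite for every `x > 0` and `ρ̄(x) ~ ℓ(1/x)` as `x → 0⁺` with `ℓ`
slowly varying, then for every integer `r ≥ 1`,
`κ(r,t) = ∫ ω^r e^{-tω} ρ(dω)` satisfies `κ(r,t) = o(t^{-r} ℓ(t))` as `t → ∞`. -/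
theorem kappa_asymptotics_sigma_zero
    (ρ : Measure ℝ) (ℓ : ℝ → ℝ)
    (hℓ_meas : Measurable ℓ) (hℓ_pos : ∀ x > 0, 0 < ℓ x) (hℓ : SlowlyVarying ℓ)
    (hρ_inf : ρ (Set.Ioi (0:ℝ)) = ⊤)
    (hρ_tail : ∀ x > 0, ρ (Set.Ioi x) < ⊤)
    (hρ_asym : Filter.Tendsto
      (fun x => (ρ (Set.Ioi x)).toReal / ℓ (1 / x))
      (nhdsWithin 0 (Set.Ioi (0:ℝ))) (nhds 1)) :
    ∀ r : ℕ, 1 ≤ r →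
      Filter.Tendsto
        (fun t => (∫ ω in Set.Ioi (0:ℝ), ω ^ r * Real.exp (-t * ω) ∂ρ) /
          (t ^ (-(r : ℝ)) * ℓ t))
        Filter.atTop (nhds 0) := by
  intro r hr
  obtain ⟨T, hT1, hTb⟩ := KappaAux3.potter ℓ hℓ_pos hℓ ρ hρ_tail hρ_asym
  have hmeas_tail : Measurable (fun s : ℝ => (ρ (Set.Ioi s)).toReal) :=
    (Antitone.measurable
      (fun s₁ s₂ h12 => measure_mono (Set.Ioi_subset_Ioi h12))).ennreal_toReal
  have hk_cont : Continuous (fun u : ℝ => u ^ (r - 1) * ((r:ℝ) - u) * Real.exp (-u)) := by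
    fun_prop
  have hcancel := KappaAux2.integral_cancel r hr
  -- Step B : dominated convergence
  have hB : Filter.Tendsto (fun t => ∫ u in Set.Ioi (0:ℝ),
      ((ρ (Set.Ioi (u / t))).toReal / ℓ t) * (u ^ (r - 1) * ((r:ℝ) - u) * Real.exp (-u)))
      Filter.atTop (nhds 0) := by
    have hdct := tendsto_integral_filter_of_dominated_convergence
      (μ := volume.restrict (Set.Ioi 0)) (l := Filter.atTop)
      (F := fun t u => ((ρ (Set.Ioi (u / t))).toReal / ℓ t) *
        (u ^ (r - 1) * ((r:ℝ) - u) * Real.exp (-u)))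
      (f := fun u => u ^ (r - 1) * ((r:ℝ) - u) * Real.exp (-u))
      (bound := fun u => |u ^ (r - 1) * ((r:ℝ) - (1:ℝ) * u) * Real.exp (-((1:ℝ) * u))| *
        (3 * (Real.sqrt ((1:ℝ) * u)⁻¹ + 1)))
      ?_ ?_ ?_ ?_
    · rw [hcancel] at hdct; exact hdct
    · filter_upwards with t
      exact (((hmeas_tail.comp (measurable_id.div_const t)).div_const (ℓ t)).mul
        hk_cont.measurable).aestronglyMeasurable
    · filter_upwards [eventually_ge_atTop T] with t hTt
      filter_upwards [ae_restrict_mem measurableSet_Ioi] with u hu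
      have hu0 : (0:ℝ) < u := hu
      have htpos : (0:ℝ) < t := lt_of_lt_of_le one_pos (le_trans hT1 hTt)
      have hℓt : 0 < ℓ t := hℓ_pos t htpos
      have hρnn : (0:ℝ) ≤ (ρ (Set.Ioi (u / t))).toReal := ENNReal.toReal_nonneg
      rw [Real.norm_eq_abs, abs_mul, abs_of_nonneg (div_nonneg hρnn hℓt.le)]
      simp only [one_mul]
      rw [mul_comm (|u ^ (r - 1) * ((r:ℝ) - u) * Real.exp (-u)|) (3 * (Real.sqrt u⁻¹ + 1))]
      refine mul_le_mul_of_nonneg_right ?_ (abs_nonneg _)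
      rw [div_le_iff₀ hℓt]
      calc (ρ (Set.Ioi (u / t))).toReal ≤ 3 * (Real.sqrt u⁻¹ + 1) * ℓ t := hTb t hTt u hu0
      _ = 3 * (Real.sqrt u⁻¹ + 1) * ℓ t := rfl
    · exact maj_integrable r hr one_pos (by norm_num)
    · filter_upwards [ae_restrict_mem measurableSet_Ioi] with u hu
      have hu0 : (0:ℝ) < u := hu
      have hlim := (pointwise_limit ρ ℓ hℓ_pos hℓ hρ_asym u hu0).mul_const
        (u ^ (r - 1) * ((r:ℝ) - u) * Real.exp (-u))
      rwa [one_mul] at hlim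
  -- Step A : eventual identity
  have hEq : ∀ᶠ t : ℝ in Filter.atTop,
      (∫ ω in Set.Ioi (0:ℝ), ω ^ r * Real.exp (-t * ω) ∂ρ) / (t ^ (-(r : ℝ)) * ℓ t)
        = ∫ u in Set.Ioi (0:ℝ),
            ((ρ (Set.Ioi (u / t))).toReal / ℓ t) *
              (u ^ (r - 1) * ((r:ℝ) - u) * Real.exp (-u)) := by
    filter_upwards [eventually_ge_atTop T] with t hTt
    have htpos : (0:ℝ) < t := lt_of_lt_of_le one_pos (le_trans hT1 hTt)
    have hℓt : 0 < ℓ t := hℓ_pos t htpos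
    have hI1 : (∫ ω in Set.Ioi (0:ℝ), ω ^ r * Real.exp (-t * ω) ∂ρ)
        = ∫ ω in Set.Ioi (0:ℝ), ω ^ r * Real.exp (-(t * ω)) ∂ρ := by
      simp only [neg_mul]
    have hbound : ∀ s : ℝ, 0 < s →
        (ρ (Set.Ioi s)).toReal ≤ (3 * ℓ t) * (Real.sqrt (t * s)⁻¹ + 1) := by
      intro s hs
      have hb := hTb t hTt (t * s) (by positivity)
      rw [mul_div_cancel_left₀ _ htpos.ne'] at hb
      calc (ρ (Set.Ioi s)).toReal ≤ 3 * (Real.sqrt (t * s)⁻¹ + 1) * ℓ t := hb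
      _ = (3 * ℓ t) * (Real.sqrt (t * s)⁻¹ + 1) := by ring
    have hkey := key_identity ρ hρ_tail r hr htpos (by positivity) hbound
    rw [hI1, hkey, substitution _ r hr htpos]
    have hrpow : (t:ℝ) ^ (-(r : ℝ)) = ((t:ℝ) ^ r)⁻¹ := by
      rw [Real.rpow_neg htpos.le, Real.rpow_natCast]
    rw [hrpow, mul_div_mul_left _ _ (inv_ne_zero (by positivity : ((t:ℝ) ^ r) ≠ 0))]
    rw [← integral_div]
    refine setIntegral_congr_fun measurableSet_Ioi fun u _ => ?_
    rw [div_mul_eq_mul_div]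
  exact Filter.Tendsto.congr' (hEq.mono fun _ h => h.symm) hB
end
end
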